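/- arXiv:2402.12166 — 4 statements merged into one kernel-verified Lean document; each statement's English description precedes it below -/
import Mathlib

section
/- Let n ≥ 2 be an integer and γ : I → ℝ² a C^∞ curve on an open interval I containing 0 with γ(0) = 0 and γ'(0) = γ''(0) = ⋯ = γ^{(n-1)}(0) = 0. Then: (i) for every C^∞ diffeomorphism germ Φ : (ℝ², 0) → (ℝ², 0), setting γ̂ = Φ ∘ γ one has det(γ̂^{(n)}(0), γ̂^{(n+1)}(0)) = det(DΦ(0)) · det(γ^{(n)}(0), γ^{(n+1)}(0)), where DΦ(0) is the Jacobian matrix of Φ at the origin; (ii) for every C^∞ diffeomorphism germ ψ : (ℝ, 0) → (ℝ, 0), setting γ̃ = γ ∘ ψ one has det(γ̃^{(n)}(0), γ̃^{(n+1)}(0)) = (ψ'(0))^{2n+1} · det(γ^{(n)}(0), γ^{(n+1)}(0)). In particular, the condition det(γ^{(n)}(0), γ^{(n+1)}(0)) ≠ 0 is invariant under such coordinate changes on the source and on the target. -/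
open Filter Topology Asymptotics
open scoped Nat
open scoped ContDiff

/-- The determinant of the 2×2 matrix with columns `u` and `v`. -/
def det2 (u v : ℝ × ℝ) : ℝ := u.1 * v.2 - u.2 * v.1

/-- `Φ` is a `C^r` diffeomorphism germ at the origin (fixing the origin), with
inverse germ `Φinv`. -/
def IsDiffeoGermAt0 {E : Type*} [NormedAddCommGroup E] [NormedSpace ℝ E]
    (r : WithTop ℕ∞) (Φ Φinv : E → E) : Prop :=
  Φ 0 = 0 ∧ Φinv 0 = 0 ∧ ContDiffAt ℝ r Φ 0 ∧ ContDiffAt ℝ r Φinv 0 ∧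
    (∀ᶠ x in nhds (0 : E), Φinv (Φ x) = x) ∧ (∀ᶠ x in nhds (0 : E), Φ (Φinv x) = x)

/-- Two map germs `γ₁ γ₂ : (ℝ,0) → (ℝ²,0)` are `C^r`-equivalent at `t = 0`:
there are `C^r` diffeomorphism germs `ψ : (ℝ,0) → (ℝ,0)` and `Ψ : (ℝ²,0) → (ℝ²,0)`
with `Ψ ∘ γ₁ = γ₂ ∘ ψ` near `0`.  For `r = ∞` this is 𝒜-equivalence, for
`r = 1` it is `C¹`-equivalence. -/
def CEquivAt0 (r : WithTop ℕ∞) (γ₁ γ₂ : ℝ → ℝ × ℝ) : Prop :=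
  γ₁ 0 = 0 ∧ γ₂ 0 = 0 ∧
    ∃ (ψ ψinv : ℝ → ℝ) (Ψ Ψinv : ℝ × ℝ → ℝ × ℝ),
      IsDiffeoGermAt0 r ψ ψinv ∧ IsDiffeoGermAt0 r Ψ Ψinv ∧
      ∀ᶠ t in nhds (0 : ℝ), Ψ (γ₁ t) = γ₂ (ψ t)

section Aux

variable {E : Type*} [NormedAddCommGroup E] [NormedSpace ℝ E]


/-- MVT step: if `g 0 = 0` and `deriv g = o(t^m)` then `g = o(t^(m+1))`. -/
lemma littleO_of_deriv_littleO (g : ℝ → E) (m : ℕ) (hg0 : g 0 = 0)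
    (hdiff : ∀ᶠ t in 𝓝 (0:ℝ), DifferentiableAt ℝ g t)
    (hd : deriv g =o[𝓝 (0:ℝ)] fun t => t ^ m) :
    g =o[𝓝 (0:ℝ)] fun t => t ^ (m + 1) := by
  rw [isLittleO_iff] at hd ⊢
  intro ε hε
  have h := (hd hε).and hdiff
  rw [Metric.eventually_nhds_iff] at h ⊢
  obtain ⟨δ, hδ, hball⟩ := h
  refine ⟨δ, hδ, fun t ht => ?_⟩
  have habs : ∀ s ∈ Set.uIcc (0:ℝ) t, |s| ≤ |t| := by
    intro s hs
    rw [abs_le]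
    exact ⟨le_trans (le_min (neg_nonpos.2 (abs_nonneg t)) (neg_abs_le t)) hs.1,
      le_trans hs.2 (max_le (abs_nonneg t) (le_abs_self t))⟩
  have hsub : ∀ s ∈ Set.uIcc (0:ℝ) t, dist s 0 < δ := by
    intro s hs
    rw [Real.dist_eq, sub_zero]
    exact lt_of_le_of_lt (habs s hs) (by simpa [Real.dist_eq] using ht)
  have key : ‖g t - g 0‖ ≤ ε * |t| ^ m * ‖t - 0‖ := by
    apply Convex.norm_image_sub_le_of_norm_hasDerivWithin_le
      (f' := deriv g) (s := Set.uIcc (0:ℝ) t)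
    · intro s hs
      exact ((hball (hsub s hs)).2.hasDerivAt).hasDerivWithinAt
    · intro s hs
      refine le_trans (hball (hsub s hs)).1 ?_
      have h1 : ‖s ^ m‖ = |s| ^ m := by rw [Real.norm_eq_abs, abs_pow]
      rw [h1]
      exact mul_le_mul_of_nonneg_left (pow_le_pow_left₀ (abs_nonneg s) (habs s hs) m) hε.le
    · exact convex_uIcc 0 t
    · exact Set.left_mem_uIcc
    · exact Set.right_mem_uIcc
  rw [hg0, sub_zero] at key
  calc ‖g t‖ ≤ ε * |t| ^ m * ‖t - 0‖ := key
    _ = ε * ‖t ^ (m+1)‖ := by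
        rw [sub_zero, Real.norm_eq_abs, Real.norm_eq_abs, abs_pow, pow_succ]; ring

/-- derivative of the polynomial part -/
lemma hasDerivAt_taylor_poly (c : ℕ → E) (m : ℕ) (t : ℝ) :
    HasDerivAt (fun t : ℝ => ∑ k ∈ Finset.range (m + 2), (t ^ k / k !) • c k)
      (∑ k ∈ Finset.range (m + 1), (t ^ k / k !) • c (k + 1)) t := by
  have h : HasDerivAt (fun t : ℝ => ∑ k ∈ Finset.range (m + 2), (t ^ k / k !) • c k)
      (∑ k ∈ Finset.range (m + 2), ((k * t ^ (k - 1)) / k !) • c k) t := by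
    apply HasDerivAt.fun_sum
    intro k _
    exact ((hasDerivAt_pow k t).div_const (k ! : ℝ)).smul_const (c k)
  convert h using 1
  rw [Finset.sum_range_succ' (fun k => ((k * t ^ (k - 1)) / k !) • c k) (m + 1)]
  simp only [Nat.cast_zero, zero_mul, zero_div, zero_smul, add_zero]
  apply Finset.sum_congr rfl
  intro k _
  congr 1
  push_cast [Nat.factorial_succ]
  have hk : (k ! : ℝ) ≠ 0 := Nat.cast_ne_zero.2 (Nat.factorial_ne_zero k)
  field_simp

/-- Peano form of Taylor's theorem at `0`. -/
lemma peano_taylor : ∀ (m : ℕ) (f : ℝ → E), ContDiffAt ℝ m f 0 →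
    (fun t => f t - ∑ k ∈ Finset.range (m + 1), (t ^ k / k !) • iteratedDeriv k f 0)
      =o[𝓝 (0:ℝ)] fun t => t ^ m := by
  intro m
  induction m with
  | zero =>
    intro f hf
    simp only [zero_add, Finset.range_one, Finset.sum_singleton, pow_zero, Nat.factorial_zero,
      Nat.cast_one, div_one, one_smul, iteratedDeriv_zero]
    rw [isLittleO_one_iff]
    simpa using hf.continuousAt.tendsto.sub_const (f 0)
  | succ m ih =>
    intro f hf
    obtain ⟨u, hu, hfu⟩ := hf.contDiffOn (le_refl _) (by simp)
    set v := interior u with hv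
    have h0v : (0:ℝ) ∈ v := mem_interior_iff_mem_nhds.2 hu
    have hfv : ContDiffOn ℝ (m + 1 : ℕ) f v := hfu.mono interior_subset
    have hderiv : ContDiffOn ℝ m (deriv f) v := by
      apply hfv.deriv_of_isOpen isOpen_interior
      norm_cast
    have hf' : ContDiffAt ℝ m (deriv f) 0 :=
      hderiv.contDiffAt (isOpen_interior.mem_nhds h0v)
    have hIH := ih (deriv f) hf'
    set g := fun t => f t - ∑ k ∈ Finset.range (m + 2), (t ^ k / k !) • iteratedDeriv k f 0
      with hg
    have hg0 : g 0 = 0 := by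
      rw [hg]
      simp only
      rw [Finset.sum_eq_single_of_mem 0 (Finset.mem_range.2 (Nat.succ_pos _))]
      · simp [iteratedDeriv_zero]
      · intro k _ hk
        simp [zero_pow hk]
    have hfdiff : ∀ t ∈ v, DifferentiableAt ℝ f t := by
      intro t ht
      exact (hfv.differentiableOn (by norm_cast) t ht).differentiableAt
        (isOpen_interior.mem_nhds ht)
    have hgdiff : ∀ t ∈ v, DifferentiableAt ℝ g t := by
      intro t ht
      exact ((hfdiff t ht).hasDerivAt.sub
        (hasDerivAt_taylor_poly (fun k => iteratedDeriv k f 0) m t)).differentiableAt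
    have hgderiv : ∀ t ∈ v, deriv g t =
        deriv f t - ∑ k ∈ Finset.range (m + 1), (t ^ k / k !) • iteratedDeriv k (deriv f) 0 := by
      intro t ht
      have := ((hfdiff t ht).hasDerivAt.sub
        (hasDerivAt_taylor_poly (fun k => iteratedDeriv k f 0) m t)).deriv
      rw [show g = f - fun t : ℝ => ∑ k ∈ Finset.range (m + 2), (t ^ k / k !) • iteratedDeriv k f 0 from rfl, this]
      congr 1
      apply Finset.sum_congr rfl
      intro k _
      rw [← iteratedDeriv_succ']
    have hd : deriv g =o[𝓝 (0:ℝ)] fun t => t ^ m := by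
      apply hIH.congr' _ (EventuallyEq.refl _ _)
      filter_upwards [isOpen_interior.mem_nhds h0v] with t ht
      exact (hgderiv t ht).symm
    exact littleO_of_deriv_littleO g m hg0
      (by filter_upwards [isOpen_interior.mem_nhds h0v] with t ht using hgdiff t ht) hd

lemma sum_pow_smul_at_zero (c : ℕ → E) (m : ℕ) :
    ∑ k ∈ Finset.range (m + 1), (0:ℝ) ^ k • c k = c 0 := by
  rw [Finset.sum_eq_single_of_mem 0 (Finset.mem_range.2 (Nat.succ_pos _))]
  · simp
  · intro k _ hk; simp [zero_pow hk]

/-- Uniqueness: a polynomial expansion which is `o(t^m)` has vanishing coefficients. -/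
lemma coeff_eq_zero_of_littleO : ∀ (m : ℕ) (c : ℕ → E),
    ((fun t => ∑ k ∈ Finset.range (m + 1), t ^ k • c k) =o[𝓝[≠] (0:ℝ)] fun t => t ^ m) →
    ∀ k ≤ m, c k = 0 := by
  intro m
  induction m with
  | zero =>
    intro c h k hk
    interval_cases k
    simp only [zero_add, Finset.range_one, Finset.sum_singleton, pow_zero, one_smul] at h
    rw [isLittleO_one_iff] at h
    exact (tendsto_nhds_unique (l := 𝓝[≠] (0:ℝ)) tendsto_const_nhds h : c 0 = 0)
  | succ m ih =>
    intro c h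
    have hQcont : Continuous fun t : ℝ => ∑ k ∈ Finset.range (m + 2), t ^ k • c k := by
      apply continuous_finset_sum
      intro k _
      exact (continuous_pow k).smul continuous_const
    have hc0 : c 0 = 0 := by
      have h1 : Tendsto (fun t : ℝ => ∑ k ∈ Finset.range (m + 2), t ^ k • c k)
          (𝓝[≠] (0:ℝ)) (𝓝 (c 0)) := by
        have := hQcont.tendsto 0
        rw [sum_pow_smul_at_zero] at this
        exact this.mono_left nhdsWithin_le_nhds
      have h2 : Tendsto (fun t : ℝ => ∑ k ∈ Finset.range (m + 2), t ^ k • c k)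
          (𝓝[≠] (0:ℝ)) (𝓝 0) := by
        rw [← isLittleO_one_iff (F := ℝ)]
        have hb : Tendsto (fun t : ℝ => t ^ (m + 1)) (𝓝[≠] (0:ℝ)) (𝓝 ((0:ℝ) ^ (m+1))) :=
          ((continuous_pow (m+1)).tendsto 0).mono_left nhdsWithin_le_nhds
        exact h.trans_isBigO (hb.isBigO_one ℝ)
      exact tendsto_nhds_unique h1 h2
    have hfactor : ∀ t : ℝ, (∑ k ∈ Finset.range (m + 2), t ^ k • c k) =
        t • ∑ k ∈ Finset.range (m + 1), t ^ k • c (k + 1) := by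
      intro t
      rw [Finset.sum_range_succ' (fun k => t ^ k • c k) (m + 1), Finset.smul_sum]
      simp only [pow_zero, one_smul, hc0, add_zero]
      apply Finset.sum_congr rfl
      intro k _
      rw [smul_smul, pow_succ']
    have hQ' : (fun t : ℝ => ∑ k ∈ Finset.range (m + 1), t ^ k • c (k + 1))
        =o[𝓝[≠] (0:ℝ)] fun t => t ^ m := by
      have hbig : (fun t : ℝ => t⁻¹) =O[𝓝[≠] (0:ℝ)] (fun t : ℝ => t⁻¹) := isBigO_refl _ _
      have h2 := hbig.smul_isLittleO h
      refine h2.congr' ?_ ?_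
      · filter_upwards [self_mem_nhdsWithin] with t ht
        rw [hfactor t, smul_smul, inv_mul_cancel₀ ht, one_smul]
      · filter_upwards [self_mem_nhdsWithin] with t ht
        simp only [smul_eq_mul, pow_succ]
        rw [mul_comm (t ^ m) t, ← mul_assoc, inv_mul_cancel₀ ht, one_mul]
    have := ih (fun k => c (k + 1)) hQ'
    intro k hk
    cases k with
    | zero => exact hc0
    | succ k => exact this k (Nat.lt_succ_iff.mp hk)

/-- Extraction: derivatives from an asymptotic polynomial expansion. -/
lemma iteratedDeriv_eq_of_expansion {m : ℕ} {f : ℝ → E} {c : ℕ → E}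
    (hf : ContDiffAt ℝ m f 0)
    (h : (fun t => f t - ∑ k ∈ Finset.range (m + 1), t ^ k • c k) =o[𝓝 (0:ℝ)] fun t => t ^ m) :
    ∀ k ≤ m, iteratedDeriv k f 0 = (k ! : ℝ) • c k := by
  have hT := peano_taylor m f hf
  have hdiff := h.sub hT
  have hEq : (fun t => (f t - ∑ k ∈ Finset.range (m + 1), t ^ k • c k) -
      (f t - ∑ k ∈ Finset.range (m + 1), (t ^ k / k !) • iteratedDeriv k f 0)) =
      fun t => ∑ k ∈ Finset.range (m + 1),
        t ^ k • ((k ! : ℝ)⁻¹ • iteratedDeriv k f 0 - c k) := by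
    funext t
    rw [sub_sub_sub_cancel_left, ← Finset.sum_sub_distrib]
    apply Finset.sum_congr rfl
    intro k _
    rw [smul_sub, smul_smul, div_eq_mul_inv]
  rw [hEq] at hdiff
  have := coeff_eq_zero_of_littleO m _ (hdiff.mono nhdsWithin_le_nhds)
  intro k hk
  have hzero := this k hk
  have hk0 : ((k ! : ℝ)) ≠ 0 := Nat.cast_ne_zero.2 (Nat.factorial_ne_zero k)
  have : (k ! : ℝ)⁻¹ • iteratedDeriv k f 0 = c k := sub_eq_zero.mp hzero
  rw [← this, smul_smul, mul_inv_cancel₀ hk0, one_smul]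

lemma pow_isBigO_pow {k l : ℕ} (h : l ≤ k) :
    (fun t : ℝ => t ^ k) =O[𝓝 (0:ℝ)] fun t => t ^ l := by
  have heq : (fun t : ℝ => t ^ k) = fun t => t ^ l * t ^ (k - l) := by
    funext t; rw [← pow_add]; congr 1; omega
  rw [heq]
  have h2 : (fun t : ℝ => t ^ (k - l)) =O[𝓝 (0:ℝ)] (fun _ => (1:ℝ)) :=
    ((continuous_pow (k - l)).tendsto 0).isBigO_one ℝ
  exact ((isBigO_refl (fun t : ℝ => t ^ l) _).mul h2).congr (fun _ => rfl) fun t => mul_one _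

lemma pow_isLittleO_pow {k l : ℕ} (h : l < k) :
    (fun t : ℝ => t ^ k) =o[𝓝 (0:ℝ)] fun t => t ^ l := by
  have heq : (fun t : ℝ => t ^ k) = fun t => t ^ l * t ^ (k - l) := by
    funext t; rw [← pow_add]; congr 1; omega
  rw [heq]
  have h2 : (fun t : ℝ => t ^ (k - l)) =o[𝓝 (0:ℝ)] (fun _ => (1:ℝ)) := by
    rw [isLittleO_one_iff]
    have : (0:ℝ) ^ (k - l) = 0 := zero_pow (by omega)
    simpa [this] using (continuous_pow (k - l)).tendsto (0:ℝ)
  exact ((isBigO_refl (fun t : ℝ => t ^ l) _).mul_isLittleO h2).congr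
    (fun _ => rfl) fun t => mul_one _

lemma sum_two_coeffs (n : ℕ) (w z : E) (t : ℝ) :
    ∑ k ∈ Finset.range (n + 2), t ^ k • (if k = n then w else if k = n + 1 then z else 0)
      = t ^ n • w + t ^ (n + 1) • z := by
  have hsub : ({n, n + 1} : Finset ℕ) ⊆ Finset.range (n + 2) := by
    intro k hk
    simp only [Finset.mem_insert, Finset.mem_singleton] at hk
    rcases hk with rfl | rfl <;> simp [Finset.mem_range] <;> omega
  rw [← Finset.sum_subset hsub]
  · rw [Finset.sum_pair (by omega : n ≠ n + 1)]
    simp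
  · intro k _ hk
    simp only [Finset.mem_insert, Finset.mem_singleton, not_or] at hk
    simp [hk.1, hk.2]

/-- Second-order Taylor bound: a `C²` map is approximated by its derivative to `O(‖y‖²)`. -/
lemma isBigO_sub_fderiv {F G : Type*} [NormedAddCommGroup F] [NormedSpace ℝ F]
    [NormedAddCommGroup G] [NormedSpace ℝ G] {Φ : F → G} (hΦ : ContDiffAt ℝ 2 Φ 0) :
    (fun y => Φ y - Φ 0 - fderiv ℝ Φ 0 y) =O[𝓝 (0:F)] fun y => ‖y‖ ^ 2 := by
  set A := fderiv ℝ Φ 0 with hA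
  have hd : DifferentiableAt ℝ (fderiv ℝ Φ) 0 := by
    have h1 : ContDiffAt ℝ 1 (fderiv ℝ Φ) 0 := hΦ.fderiv_right (m := 1) (by norm_num)
    exact h1.differentiableAt (by norm_num)
  have hO : (fun y => fderiv ℝ Φ y - A) =O[𝓝 (0:F)] fun y => y := by
    have := hd.isBigO_sub
    simpa using this
  obtain ⟨C, hC0, hCw⟩ := hO.exists_nonneg
  have hC := hCw.bound
  have hev : ∀ᶠ y in 𝓝 (0:F), DifferentiableAt ℝ Φ y := by
    have := hΦ.eventually (by simp)
    filter_upwards [this] with y hy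
    exact hy.differentiableAt (by norm_num)
  rw [isBigO_iff]
  refine ⟨C, ?_⟩
  have hcomb := hC.and hev
  rw [Metric.eventually_nhds_iff] at hcomb ⊢
  obtain ⟨δ, hδ, hball⟩ := hcomb
  refine ⟨δ, hδ, fun y hy => ?_⟩
  have hy' : ‖y‖ < δ := by simpa [dist_zero_right] using hy
  have hsub : Metric.closedBall (0:F) ‖y‖ ⊆ {z | dist z 0 < δ} := by
    intro z hz
    simp only [Metric.mem_closedBall] at hz
    exact lt_of_le_of_lt hz hy'
  have h1 : ∀ z ∈ Metric.closedBall (0:F) ‖y‖,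
      HasFDerivWithinAt (fun z => Φ z - A z) (fderiv ℝ Φ z - A) (Metric.closedBall (0:F) ‖y‖) z :=
    fun z hz => ((hball (hsub hz)).2.hasFDerivAt.sub A.hasFDerivAt).hasFDerivWithinAt
  have h2 : ∀ z ∈ Metric.closedBall (0:F) ‖y‖, ‖fderiv ℝ Φ z - A‖ ≤ C * ‖y‖ := by
    intro z hz
    refine le_trans (hball (hsub hz)).1 ?_
    have hz' : ‖z‖ ≤ ‖y‖ := by simpa [dist_zero_right] using hz
    exact mul_le_mul_of_nonneg_left hz' hC0
  have h4 : (0:F) ∈ Metric.closedBall (0:F) ‖y‖ := Metric.mem_closedBall_self (norm_nonneg y)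
  have h5 : y ∈ Metric.closedBall (0:F) ‖y‖ := by
    simp [Metric.mem_closedBall, dist_zero_right]
  have key := Convex.norm_image_sub_le_of_norm_hasFDerivWithin_le h1 h2
    (convex_closedBall _ _) h4 h5
  have : Φ y - Φ 0 - A y = (Φ y - A y) - (Φ 0 - A 0) := by
    rw [map_zero]; abel
  rw [this]
  refine le_trans key ?_
  rw [sub_zero, norm_pow, norm_norm, pow_two]
  exact le_of_eq (by ring)

lemma det2_clm (A : ℝ × ℝ →L[ℝ] ℝ × ℝ) (u v : ℝ × ℝ) :
    det2 (A u) (A v) = LinearMap.det (A.toLinearMap) * det2 u v := by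
  have hdet : LinearMap.det (A.toLinearMap) =
      (A (1,0)).1 * (A (0,1)).2 - (A (1,0)).2 * (A (0,1)).1 := by
    rw [← LinearMap.det_toMatrix (Module.Basis.finTwoProd ℝ), Matrix.det_fin_two]
    simp [LinearMap.toMatrix_apply, Module.Basis.coe_finTwoProd_repr, Module.Basis.finTwoProd_zero,
      Module.Basis.finTwoProd_one]
    ring
  have hexp : ∀ w : ℝ × ℝ, A w = w.1 • A (1,0) + w.2 • A (0,1) := by
    intro w
    rw [← map_smul, ← map_smul, ← map_add]
    congr 1
    apply Prod.ext <;> simp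
  rw [hdet, hexp u, hexp v]
  simp only [det2, Prod.fst_add, Prod.snd_add, Prod.smul_fst, Prod.smul_snd, smul_eq_mul]
  ring

lemma smul_const_isLittleO {f g : ℝ → ℝ} (a : E) (h : f =o[𝓝 (0:ℝ)] g) :
    (fun t => f t • a) =o[𝓝 (0:ℝ)] g := by
  have h2 : (fun _ : ℝ => a) =O[𝓝 (0:ℝ)] (fun _ => (1:ℝ)) :=
    (tendsto_const_nhds (α := ℝ)).isBigO_one ℝ
  have := h.smul_isBigO h2
  exact this.congr (fun _ => rfl) fun t => by simp

/-- Expansion of powers of `ψ`. -/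
lemma psi_pow_expansion {ψ : ℝ → ℝ} {c d : ℝ}
    (hψ : (fun t => ψ t - (c * t + d * t ^ 2)) =o[𝓝 (0:ℝ)] fun t => t ^ 2) :
    ∀ j : ℕ, 1 ≤ j →
      (fun t => ψ t ^ j - (c ^ j * t ^ j + j * c ^ (j - 1) * d * t ^ (j + 1)))
        =o[𝓝 (0:ℝ)] fun t => t ^ (j + 1) := by
  have hct : (fun t : ℝ => c * t) =O[𝓝 (0:ℝ)] fun t => t :=
    (isBigO_refl (fun t : ℝ => t) _).const_mul_left c
  have hdt2 : (fun t : ℝ => d * t ^ 2) =O[𝓝 (0:ℝ)] fun t => t := by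
    have := (pow_isBigO_pow (show 1 ≤ 2 by omega)).const_mul_left d
    simpa [pow_one] using this
  have hrO : (fun t => ψ t - (c * t + d * t ^ 2)) =O[𝓝 (0:ℝ)] fun t => t := by
    have := hψ.isBigO.trans (pow_isBigO_pow (show 1 ≤ 2 by omega))
    simpa [pow_one] using this
  have hψO : ψ =O[𝓝 (0:ℝ)] fun t => t := by
    have := hrO.add (hct.add hdt2)
    exact this.congr_left fun t => by ring
  intro j hj
  induction j with
  | zero => omega
  | succ j ihj =>
    rcases Nat.eq_or_lt_of_le hj with h1 | h1
    · have hj0 : j = 0 := by omega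
      subst hj0
      simpa using hψ.congr_left fun t => by simp
    · have hj1 : 1 ≤ j := by omega
      have hR := ihj hj1
      obtain ⟨i, rfl⟩ : ∃ i, j = i + 1 := ⟨j - 1, by omega⟩
      simp only [Nat.add_sub_cancel] at hR ⊢
      have hterm1 : (fun t : ℝ => ((i:ℝ)+1) * c ^ i * d ^ 2 * t ^ (i+4))
          =o[𝓝 (0:ℝ)] fun t => t ^ (i+3) :=
        (pow_isLittleO_pow (by omega)).const_mul_left _
      have hterm2 : (fun t : ℝ => (c * t + d * t ^ 2) *
          (ψ t ^ (i+1) - (c ^ (i+1) * t ^ (i+1) + ((i:ℝ)+1) * c ^ i * d * t ^ (i+1+1))))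
          =o[𝓝 (0:ℝ)] fun t => t ^ (i+3) := by
        have hRc : (fun t => ψ t ^ (i+1) -
            (c ^ (i+1) * t ^ (i+1) + ((i:ℝ)+1) * c ^ i * d * t ^ (i+1+1)))
            =o[𝓝 (0:ℝ)] fun t => t ^ (i+1+1) := by
          refine hR.congr_left fun t => ?_
          push_cast
          ring
        have := (hct.add hdt2).mul_isLittleO hRc
        exact this.congr (fun t => rfl) fun t => by rw [← pow_succ']
      have hterm3 : (fun t : ℝ => (ψ t - (c * t + d * t ^ 2)) * ψ t ^ (i+1))
          =o[𝓝 (0:ℝ)] fun t => t ^ (i+3) := by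
        have := hψ.mul_isBigO (hψO.pow (i+1))
        exact this.congr (fun t => rfl) fun t => by
          rw [← pow_add, show 2 + (i+1) = i+3 from by omega]
      have hsum := (hterm1.add hterm2).add hterm3
      refine hsum.congr' (EventuallyEq.of_eq (funext fun t => ?_))
        (EventuallyEq.of_eq (funext fun t => by norm_num))
      push_cast
      ring

open scoped ContDiff

lemma le_infty_aux (m : ℕ∞) : (m : WithTop ℕ∞) ≤ ∞ := WithTop.coe_le_coe.2 le_top

lemma gamma_expansion (n : ℕ) (hn : 2 ≤ n) {γ : ℝ → E} (hγat : ContDiffAt ℝ ∞ γ 0)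
    (hγ0 : γ 0 = 0) (hvan : ∀ k, 1 ≤ k → k ≤ n - 1 → iteratedDeriv k γ 0 = 0) :
    (fun t => γ t - (t ^ n • ((n ! : ℝ)⁻¹ • iteratedDeriv n γ 0)
        + t ^ (n+1) • (((n+1)! : ℝ)⁻¹ • iteratedDeriv (n+1) γ 0)))
      =o[𝓝 (0:ℝ)] fun t => t ^ (n+1) := by
  have hP := peano_taylor (n+1) γ (hγat.of_le (by exact_mod_cast le_top))
  refine hP.congr_left fun t => ?_
  congr 1
  have hsub : ({n, n + 1} : Finset ℕ) ⊆ Finset.range (n + 1 + 1) := by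
    intro k hk
    simp only [Finset.mem_insert, Finset.mem_singleton] at hk
    rcases hk with rfl | rfl <;> simp [Finset.mem_range] <;> omega
  rw [← Finset.sum_subset hsub]
  · rw [Finset.sum_pair (by omega : n ≠ n + 1)]
    congr 1 <;> rw [smul_smul, div_eq_mul_inv]
  · intro k hk hknot
    simp only [Finset.mem_insert, Finset.mem_singleton, not_or] at hknot
    rcases Nat.eq_zero_or_pos k with rfl | hk1
    · simp [iteratedDeriv_zero, hγ0]
    · rw [hvan k hk1 (by simp [Finset.mem_range] at hk; omega), smul_zero]

lemma smul_const_isBigO {f g : ℝ → ℝ} (a : E) (h : f =O[𝓝 (0:ℝ)] g) :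
    (fun t => f t • a) =O[𝓝 (0:ℝ)] g := by
  have h2 : (fun _ : ℝ => a) =O[𝓝 (0:ℝ)] (fun _ => (1:ℝ)) :=
    (tendsto_const_nhds (α := ℝ)).isBigO_one ℝ
  exact (h.smul h2).congr (fun _ => rfl) fun t => by simp

lemma gamma_isBigO {n : ℕ} {γ : ℝ → E} {a b : E}
    (hγexp : (fun t => γ t - (t ^ n • a + t ^ (n+1) • b)) =o[𝓝 (0:ℝ)] fun t => t ^ (n+1)) :
    γ =O[𝓝 (0:ℝ)] fun t => t ^ n := by
  have h1 : (fun t => γ t - (t ^ n • a + t ^ (n+1) • b)) =O[𝓝 (0:ℝ)] fun t => t ^ n :=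
    hγexp.isBigO.trans (pow_isBigO_pow (by omega))
  have h2 : (fun t : ℝ => t ^ n • a) =O[𝓝 (0:ℝ)] fun t => t ^ n :=
    smul_const_isBigO a (isBigO_refl _ _)
  have h3 : (fun t : ℝ => t ^ (n+1) • b) =O[𝓝 (0:ℝ)] fun t => t ^ n :=
    smul_const_isBigO b (pow_isBigO_pow (by omega))
  exact ((h1.add h2).add h3).congr_left fun t => by abel

lemma target_deriv (n : ℕ) (hn : 2 ≤ n) {γ : ℝ → ℝ × ℝ} {Φ : ℝ × ℝ → ℝ × ℝ} {a b : ℝ × ℝ}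
    (hγat : ContDiffAt ℝ ∞ γ 0) (hγ0 : γ 0 = 0)
    (hγexp : (fun t => γ t - (t ^ n • a + t ^ (n+1) • b)) =o[𝓝 (0:ℝ)] fun t => t ^ (n+1))
    (hΦat : ContDiffAt ℝ ∞ Φ 0) (hΦ0 : Φ 0 = 0) :
    iteratedDeriv n (Φ ∘ γ) 0 = (n ! : ℝ) • fderiv ℝ Φ 0 a ∧
    iteratedDeriv (n+1) (Φ ∘ γ) 0 = ((n+1)! : ℝ) • fderiv ℝ Φ 0 b := by
  set A := fderiv ℝ Φ 0 with hA
  have hγtend : Filter.Tendsto γ (𝓝 (0:ℝ)) (𝓝 (0:ℝ×ℝ)) := by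
    have := hγat.continuousAt.tendsto
    rwa [hγ0] at this
  have hbig : (fun t => Φ (γ t) - Φ 0 - A (γ t)) =O[𝓝 (0:ℝ)] fun t => ‖γ t‖ ^ 2 :=
    (isBigO_sub_fderiv (hΦat.of_le (le_infty_aux 2))).comp_tendsto hγtend
  have hγO := gamma_isBigO hγexp
  have hnorm2 : (fun t => ‖γ t‖ ^ 2) =O[𝓝 (0:ℝ)] fun t => t ^ (2 * n) := by
    have := (hγO.norm_left).pow 2
    refine this.trans (IsBigO.of_bound 1 ?_)
    filter_upwards with t
    rw [← pow_mul, mul_comm n 2, one_mul]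
  have hlittle : (fun t => Φ (γ t) - A (γ t)) =o[𝓝 (0:ℝ)] fun t => t ^ (n+1) := by
    have := (hbig.trans hnorm2).trans_isLittleO (pow_isLittleO_pow (by omega : n + 1 < 2 * n))
    refine this.congr_left fun t => ?_
    rw [hΦ0, sub_zero]
  have hlin : (fun t => A (γ t - (t ^ n • a + t ^ (n+1) • b))) =o[𝓝 (0:ℝ)]
      fun t => t ^ (n+1) := (A.isBigO_comp _ _).trans_isLittleO hγexp
  have hcomp : (fun t => (Φ ∘ γ) t - (t ^ n • A a + t ^ (n+1) • A b)) =o[𝓝 (0:ℝ)]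
      fun t => t ^ (n+1) := by
    refine (hlittle.add hlin).congr_left fun t => ?_
    simp only [map_sub, map_add, map_smul, Function.comp_apply]
    abel
  set e : ℕ → ℝ × ℝ := fun k => if k = n then A a else if k = n + 1 then A b else 0 with he
  have hexp2 : (fun t => (Φ ∘ γ) t - ∑ k ∈ Finset.range (n + 1 + 1), t ^ k • e k)
      =o[𝓝 (0:ℝ)] fun t => t ^ (n+1) := by
    refine hcomp.congr_left fun t => ?_
    rw [he]
    rw [sum_two_coeffs n (A a) (A b) t]
  have hcompC : ContDiffAt ℝ (n+1 : ℕ) (Φ ∘ γ) 0 := by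
    have h1 : ContDiffAt ℝ (n+1 : ℕ) Φ (γ 0) := by
      rw [hγ0]; exact hΦat.of_le (by exact_mod_cast le_top)
    exact h1.comp 0 (hγat.of_le (by exact_mod_cast le_top))
  have hext := iteratedDeriv_eq_of_expansion hcompC hexp2
  constructor
  · have := hext n (by omega)
    rw [this, he]
    simp
  · have := hext (n+1) (le_refl _)
    rw [this, he]
    simp

lemma source_deriv (n : ℕ) (hn : 2 ≤ n) {γ : ℝ → ℝ × ℝ} {ψ : ℝ → ℝ} {a b : ℝ × ℝ} {c d : ℝ}
    (hγat : ContDiffAt ℝ ∞ γ 0) (hγ0 : γ 0 = 0)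
    (hγexp : (fun t => γ t - (t ^ n • a + t ^ (n+1) • b)) =o[𝓝 (0:ℝ)] fun t => t ^ (n+1))
    (hψat : ContDiffAt ℝ ∞ ψ 0) (hψ0 : ψ 0 = 0)
    (hψexp : (fun t => ψ t - (c * t + d * t ^ 2)) =o[𝓝 (0:ℝ)] fun t => t ^ 2) :
    iteratedDeriv n (γ ∘ ψ) 0 = (n ! : ℝ) • (c ^ n • a) ∧
    iteratedDeriv (n+1) (γ ∘ ψ) 0 =
      ((n+1)! : ℝ) • (((n : ℝ) * c ^ (n-1) * d) • a + c ^ (n+1) • b) := by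
  have hψtend : Filter.Tendsto ψ (𝓝 (0:ℝ)) (𝓝 (0:ℝ)) := by
    have := hψat.continuousAt.tendsto
    rwa [hψ0] at this
  have hψO : ψ =O[𝓝 (0:ℝ)] fun t => t := by
    have hct : (fun t : ℝ => c * t) =O[𝓝 (0:ℝ)] fun t => t :=
      (isBigO_refl (fun t : ℝ => t) _).const_mul_left c
    have hdt2 : (fun t : ℝ => d * t ^ 2) =O[𝓝 (0:ℝ)] fun t => t := by
      have := (pow_isBigO_pow (show 1 ≤ 2 by omega)).const_mul_left d
      simpa [pow_one] using this
    have hrO : (fun t => ψ t - (c * t + d * t ^ 2)) =O[𝓝 (0:ℝ)] fun t => t := by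
      have := hψexp.isBigO.trans (pow_isBigO_pow (show 1 ≤ 2 by omega))
      simpa [pow_one] using this
    exact (hrO.add (hct.add hdt2)).congr_left fun t => by ring
  have hpown := psi_pow_expansion hψexp n (by omega)
  have hpown1 := psi_pow_expansion hψexp (n+1) (by omega)
  rw [Nat.add_sub_cancel] at hpown1
  have T1 : (fun t => (ψ t ^ n - (c^n * t^n + (n:ℝ) * c^(n-1) * d * t^(n+1))) • a)
      =o[𝓝 (0:ℝ)] fun t => t ^ (n+1) := smul_const_isLittleO a hpown
  have T2 : (fun t => (ψ t ^ (n+1) - (c^(n+1) * t^(n+1) + ((n:ℝ)+1) * c^n * d * t^(n+2))) • b)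
      =o[𝓝 (0:ℝ)] fun t => t ^ (n+1) := by
    refine smul_const_isLittleO b ((hpown1.trans_isBigO (pow_isBigO_pow (by omega))).congr_left
      fun t => ?_)
    push_cast
    norm_num
  have T3 : (fun t : ℝ => (((n:ℝ)+1) * c^n * d * t^(n+2)) • b) =o[𝓝 (0:ℝ)]
      fun t => t ^ (n+1) :=
    smul_const_isLittleO b ((pow_isLittleO_pow (by omega)).const_mul_left _)
  have T4 : (fun t => γ (ψ t) - (ψ t ^ n • a + ψ t ^ (n+1) • b)) =o[𝓝 (0:ℝ)]
      fun t => t ^ (n+1) := by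
    have hcmp := hγexp.comp_tendsto hψtend
    exact hcmp.trans_isBigO (hψO.pow (n+1))
  have hsum := ((T1.add T2).add T3).add T4
  have hkey : (fun t => (γ ∘ ψ) t - (t ^ n • (c ^ n • a)
      + t ^ (n+1) • ((((n:ℝ)) * c ^ (n-1) * d) • a + c ^ (n+1) • b))) =o[𝓝 (0:ℝ)]
      fun t => t ^ (n+1) := by
    refine hsum.congr_left fun t => ?_
    simp only [Function.comp_apply, Prod.ext_iff, Prod.smul_fst, Prod.smul_snd, Prod.fst_add,
      Prod.snd_add, Prod.fst_sub, Prod.snd_sub, smul_eq_mul]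
    constructor <;> ring
  set w : ℝ × ℝ := c ^ n • a with hw
  set z : ℝ × ℝ := (((n:ℝ)) * c ^ (n-1) * d) • a + c ^ (n+1) • b with hz
  set e : ℕ → ℝ × ℝ := fun k => if k = n then w else if k = n + 1 then z else 0 with he
  have hexp2 : (fun t => (γ ∘ ψ) t - ∑ k ∈ Finset.range (n + 1 + 1), t ^ k • e k)
      =o[𝓝 (0:ℝ)] fun t => t ^ (n+1) := by
    refine hkey.congr_left fun t => ?_
    rw [he, sum_two_coeffs n w z t]
  have hcompC : ContDiffAt ℝ (n+1 : ℕ) (γ ∘ ψ) 0 := by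
    have h1 : ContDiffAt ℝ (n+1 : ℕ) γ (ψ 0) := by
      rw [hψ0]; exact hγat.of_le (by exact_mod_cast le_top)
    exact h1.comp 0 (hψat.of_le (by exact_mod_cast le_top))
  have hext := iteratedDeriv_eq_of_expansion hcompC hexp2
  constructor
  · have := hext n (by omega)
    rw [this, he]
    simp
  · have := hext (n+1) (le_refl _)
    rw [this, he]
    simp

lemma germ_det_ne_zero {Φ Φinv : ℝ × ℝ → ℝ × ℝ} (h : IsDiffeoGermAt0 ∞ Φ Φinv) :
    LinearMap.det (fderiv ℝ Φ 0).toLinearMap ≠ 0 := by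
  obtain ⟨hΦ0, _, hΦat, hΦinvat, hleft, _⟩ := h
  have hdΦ : DifferentiableAt ℝ Φ 0 := hΦat.differentiableAt (by simp)
  have hdΦinv : DifferentiableAt ℝ Φinv (Φ 0) := by
    rw [hΦ0]; exact hΦinvat.differentiableAt (by simp)
  have h1 : (fun x => Φinv (Φ x)) =ᶠ[𝓝 (0:ℝ×ℝ)] id := hleft
  have hfd : fderiv ℝ (fun x => Φinv (Φ x)) 0 = ContinuousLinearMap.id ℝ (ℝ × ℝ) := by
    rw [h1.fderiv_eq, fderiv_id]
  have hchain : fderiv ℝ (fun x => Φinv (Φ x)) 0 =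
      (fderiv ℝ Φinv (Φ 0)).comp (fderiv ℝ Φ 0) := fderiv_comp 0 hdΦinv hdΦ
  have hdet := congrArg (fun L : (ℝ×ℝ) →L[ℝ] (ℝ×ℝ) =>
    LinearMap.det (ContinuousLinearMap.toLinearMap L)) (hchain.symm.trans hfd)
  simp only [ContinuousLinearMap.coe_comp, LinearMap.det_comp,
    ContinuousLinearMap.coe_id, LinearMap.det_id] at hdet
  intro h0
  have h2 : LinearMap.det ((fderiv ℝ Φinv (Φ 0)).comp (fderiv ℝ Φ 0)).toLinearMap =
      LinearMap.det (fderiv ℝ Φinv (Φ 0)).toLinearMap * LinearMap.det (fderiv ℝ Φ 0).toLinearMap :=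
    LinearMap.det_comp _ _
  rw [h2, h0, mul_zero] at hdet
  exact zero_ne_one hdet

lemma germ_deriv_ne_zero {ψ ψinv : ℝ → ℝ} (h : IsDiffeoGermAt0 ∞ ψ ψinv) :
    deriv ψ 0 ≠ 0 := by
  obtain ⟨hψ0, _, hψat, hψinvat, hleft, _⟩ := h
  have hdψ : DifferentiableAt ℝ ψ 0 := hψat.differentiableAt (by simp)
  have hdψinv : DifferentiableAt ℝ ψinv (ψ 0) := by
    rw [hψ0]; exact hψinvat.differentiableAt (by simp)
  have h1 : (fun x => ψinv (ψ x)) =ᶠ[𝓝 (0:ℝ)] id := hleft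
  have hfd : deriv (fun x => ψinv (ψ x)) 0 = 1 := by
    rw [h1.deriv_eq, deriv_id]
  have hchain : deriv (fun x => ψinv (ψ x)) 0 = deriv ψinv (ψ 0) * deriv ψ 0 :=
    deriv_comp 0 hdψinv hdψ
  intro h0
  rw [hchain, h0, mul_zero] at hfd
  exact zero_ne_one hfd

lemma det2_smul (cn cn1 β : ℝ) (u v : ℝ × ℝ) :
    det2 (cn • u) (β • u + cn1 • v) = cn * cn1 * det2 u v := by
  simp only [det2, Prod.smul_fst, Prod.smul_snd, Prod.fst_add, Prod.snd_add, smul_eq_mul]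
  ring


end Aux

/-- Transformation rule for `det(γ^{(n)}(0), γ^{(n+1)}(0))` under
`C^∞` diffeomorphism germs of the target and of the source; in particular the
nonvanishing of this determinant is invariant under such coordinate changes. -/
theorem stmt_2 (n : ℕ) (hn : 2 ≤ n) (I : Set ℝ) (hI : IsOpen I) (hI0 : (0 : ℝ) ∈ I)
    (γ : ℝ → ℝ × ℝ) (hγ : ContDiffOn ℝ ∞ γ I) (hγ0 : γ 0 = 0)
    (hvan : ∀ k, 1 ≤ k → k ≤ n - 1 → iteratedDeriv k γ 0 = 0) :
    (∀ Φ Φinv : ℝ × ℝ → ℝ × ℝ, IsDiffeoGermAt0 ∞ Φ Φinv →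
      det2 (iteratedDeriv n (Φ ∘ γ) 0) (iteratedDeriv (n + 1) (Φ ∘ γ) 0) =
        LinearMap.det (fderiv ℝ Φ 0).toLinearMap *
          det2 (iteratedDeriv n γ 0) (iteratedDeriv (n + 1) γ 0)) ∧
    (∀ ψ ψinv : ℝ → ℝ, IsDiffeoGermAt0 ∞ ψ ψinv →
      det2 (iteratedDeriv n (γ ∘ ψ) 0) (iteratedDeriv (n + 1) (γ ∘ ψ) 0) =
        deriv ψ 0 ^ (2 * n + 1) *
          det2 (iteratedDeriv n γ 0) (iteratedDeriv (n + 1) γ 0)) ∧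
    (∀ Φ Φinv : ℝ × ℝ → ℝ × ℝ, IsDiffeoGermAt0 ∞ Φ Φinv →
      (det2 (iteratedDeriv n (Φ ∘ γ) 0) (iteratedDeriv (n + 1) (Φ ∘ γ) 0) ≠ 0 ↔
        det2 (iteratedDeriv n γ 0) (iteratedDeriv (n + 1) γ 0) ≠ 0)) ∧
    (∀ ψ ψinv : ℝ → ℝ, IsDiffeoGermAt0 ∞ ψ ψinv →
      (det2 (iteratedDeriv n (γ ∘ ψ) 0) (iteratedDeriv (n + 1) (γ ∘ ψ) 0) ≠ 0 ↔
        det2 (iteratedDeriv n γ 0) (iteratedDeriv (n + 1) γ 0) ≠ 0)) := by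
  have hγat : ContDiffAt ℝ ∞ γ 0 := hγ.contDiffAt (hI.mem_nhds hI0)
  set γn := iteratedDeriv n γ 0 with hγn
  set γn1 := iteratedDeriv (n+1) γ 0 with hγn1
  set a : ℝ × ℝ := (n ! : ℝ)⁻¹ • γn with ha
  set b : ℝ × ℝ := ((n+1)! : ℝ)⁻¹ • γn1 with hb
  have hγexp : (fun t => γ t - (t ^ n • a + t ^ (n+1) • b)) =o[𝓝 (0:ℝ)]
      fun t => t ^ (n+1) := gamma_expansion n hn hγat hγ0 hvan
  have hna : (n ! : ℝ) • a = γn := by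
    rw [ha, smul_smul, mul_inv_cancel₀ (Nat.cast_ne_zero.2 (Nat.factorial_ne_zero n)), one_smul]
  have hnb : ((n+1)! : ℝ) • b = γn1 := by
    rw [hb, smul_smul, mul_inv_cancel₀ (Nat.cast_ne_zero.2 (Nat.factorial_ne_zero (n+1))),
      one_smul]
  have PartA : ∀ Φ Φinv : ℝ × ℝ → ℝ × ℝ, IsDiffeoGermAt0 ∞ Φ Φinv →
      det2 (iteratedDeriv n (Φ ∘ γ) 0) (iteratedDeriv (n + 1) (Φ ∘ γ) 0) =
        LinearMap.det (fderiv ℝ Φ 0).toLinearMap * det2 γn γn1 := by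
    intro Φ Φinv hgerm
    obtain ⟨hΦ0, _, hΦat, _, _, _⟩ := hgerm
    obtain ⟨hd1, hd2⟩ := target_deriv n hn hγat hγ0 hγexp hΦat hΦ0
    rw [hd1, hd2, ← map_smul, ← map_smul, hna, hnb]
    exact det2_clm (fderiv ℝ Φ 0) γn γn1
  have PartB : ∀ ψ ψinv : ℝ → ℝ, IsDiffeoGermAt0 ∞ ψ ψinv →
      det2 (iteratedDeriv n (γ ∘ ψ) 0) (iteratedDeriv (n + 1) (γ ∘ ψ) 0) =
        deriv ψ 0 ^ (2 * n + 1) * det2 γn γn1 := by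
    intro ψ ψinv hgerm
    obtain ⟨hψ0, _, hψat, _, _, _⟩ := hgerm
    set c := deriv ψ 0 with hc
    set d := (2 : ℝ)⁻¹ * iteratedDeriv 2 ψ 0 with hd
    have hψexp : (fun t => ψ t - (c * t + d * t ^ 2)) =o[𝓝 (0:ℝ)] fun t => t ^ 2 := by
      have hP := peano_taylor 2 ψ (hψat.of_le (le_infty_aux 2))
      refine hP.congr_left fun t => ?_
      congr 1
      rw [show (2:ℕ) + 1 = 3 from rfl, Finset.sum_range_succ, Finset.sum_range_succ,
        Finset.sum_range_one]
      simp only [iteratedDeriv_zero, hψ0, smul_zero, zero_add, pow_one, iteratedDeriv_one,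
        smul_eq_mul, Nat.factorial_one, Nat.cast_one, div_one, Nat.factorial_two, Nat.cast_ofNat]
      rw [hd]
      ring
    obtain ⟨hd1, hd2⟩ := source_deriv n hn hγat hγ0 hγexp hψat hψ0 hψexp
    have e1 : iteratedDeriv n (γ ∘ ψ) 0 = c ^ n • γn := by
      rw [hd1, smul_comm, hna]
    have e2 : iteratedDeriv (n+1) (γ ∘ ψ) 0 =
        (((n+1)! : ℝ) * ((n : ℝ) * c ^ (n-1) * d) * (n ! : ℝ)⁻¹) • γn + c ^ (n+1) • γn1 := by
      rw [hd2, smul_add, smul_comm _ (c^(n+1)) b, hnb, smul_smul, ha, smul_smul, mul_assoc]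
    rw [e1, e2, det2_smul]
    congr 1
    rw [← pow_add]
    congr 1
    omega
  refine ⟨PartA, PartB, ?_, ?_⟩
  · intro Φ Φinv hgerm
    rw [PartA Φ Φinv hgerm]
    have hne := germ_det_ne_zero hgerm
    constructor
    · intro h h0
      exact h (by rw [h0, mul_zero])
    · intro h
      exact mul_ne_zero hne h
  · intro ψ ψinv hgerm
    rw [PartB ψ ψinv hgerm]
    have hne : deriv ψ 0 ^ (2 * n + 1) ≠ 0 := pow_ne_zero _ (germ_deriv_ne_zero hgerm)
    constructor
    · intro h h0
      exact h (by rw [h0, mul_zero])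
    · intro h
      exact mul_ne_zero hne h
end

section
/- Let n ≥ 3 be an integer, I ⊂ ℝ an open interval containing 0, and (γ, ν) : I → ℝ² × S¹ a Legendre immersion without inflection points. If γ is 𝒜-equivalent at t = 0 to Cusp_{(n,n+1)}(t) = (tⁿ, t^{n+1}), then t = 0 is a singular point of Evⁱ(γ) for every i = 1, …, n−2 and a regular point of Ev^{n-1}(γ). -/
open Filter Topology
open scoped ContDiff

/-- The dot product on `ℝ²`. -/
def dot2 (u v : ℝ × ℝ) : ℝ := u.1 * v.1 + u.2 * v.2

/-- The Euclidean norm on `ℝ²`. -/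
noncomputable def norm2 (u : ℝ × ℝ) : ℝ := Real.sqrt (u.1 ^ 2 + u.2 ^ 2)

/-- `rot2` is the anticlockwise rotation of `ℝ²` by `π/2`. -/
def rot2 (u : ℝ × ℝ) : ℝ × ℝ := (-u.2, u.1)

/-- `(γ, ν)` is a Legendre immersion on `I` (with `ν` circle-valued). -/
def IsLegendreImmersionOn (γ ν : ℝ → ℝ × ℝ) (I : Set ℝ) : Prop :=
  ContDiffOn ℝ ∞ γ I ∧ ContDiffOn ℝ ∞ ν I ∧
    (∀ t ∈ I, norm2 (ν t) = 1) ∧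
    (∀ t ∈ I, dot2 (deriv γ t) (ν t) = 0) ∧
    (∀ t ∈ I, ¬(deriv γ t = 0 ∧ deriv ν t = 0))

/-- `ell ν t = ν'(t) · μ(t)`, where `μ = rot2 ∘ ν`. -/
noncomputable def ell (ν : ℝ → ℝ × ℝ) (t : ℝ) : ℝ := dot2 (deriv ν t) (rot2 (ν t))

/-- `bet γ ν 0 = β = γ' · μ` and `bet γ ν (k+1) = (bet γ ν k / ell ν)'`. -/
noncomputable def bet (γ ν : ℝ → ℝ × ℝ) : ℕ → ℝ → ℝ
  | 0 => fun t => dot2 (deriv γ t) (rot2 (ν t))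
  | k + 1 => fun t => deriv (fun s => bet γ ν k s / ell ν s) t

/-- The `k`-th evolute of the front `γ`:
`Ev⁰(γ) = γ` and `Evᵏ(γ)(t) = Ev^{k-1}(γ)(t) − (β_{k-1}(t)/ℓ(t)) • M^{k-1}(ν(t))`. -/
noncomputable def evolute (γ ν : ℝ → ℝ × ℝ) : ℕ → ℝ → ℝ × ℝ
  | 0 => γ
  | k + 1 => fun t => evolute γ ν k t - (bet γ ν k t / ell ν t) • rot2^[k] (ν t)


lemma ext_poly : ∀ (m : ℕ) (c : ℕ → ℝ) (d : ℝ),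
    Tendsto (fun t : ℝ => (∑ j ∈ Finset.range (m+1), c j * t ^ j) / t ^ m) (𝓝[≠] 0) (𝓝 d) →
    (∀ j < m, c j = 0) ∧ c m = d := by
  intro m
  induction m with
  | zero =>
    intro c d h
    norm_num at h
    exact ⟨fun j hj => absurd hj (Nat.not_lt_zero j), h⟩
  | succ m ih =>
    intro c d d_lim
    have hcont : Continuous (fun t : ℝ => ∑ j ∈ Finset.range (m+1+1), c j * t ^ j) := by
      apply continuous_finset_sum
      exact fun j _ => continuous_const.mul (continuous_pow j)
    have hp0 : (∑ j ∈ Finset.range (m+1+1), c j * (0:ℝ) ^ j) = c 0 := by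
      rw [Finset.sum_range_succ' (fun j => c j * (0:ℝ) ^ j) (m+1)]
      simp [zero_pow]
    have hpowto : Tendsto (fun t : ℝ => t ^ (m+1)) (𝓝[≠] (0:ℝ)) (𝓝 0) := by
      simpa using ((continuous_pow (m+1)).tendsto (0:ℝ)).mono_left
        (nhdsWithin_le_nhds : 𝓝[≠](0:ℝ) ≤ 𝓝 0)
    have h1 : Tendsto (fun t : ℝ => ∑ j ∈ Finset.range (m+1+1), c j * t ^ j) (𝓝[≠] (0:ℝ)) (𝓝 0) := by
      have h2 : Tendsto (fun t : ℝ => ((∑ j ∈ Finset.range (m+1+1), c j * t ^ j) / t ^ (m+1)) * t ^ (m+1))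
          (𝓝[≠] (0:ℝ)) (𝓝 (d * 0)) := d_lim.mul hpowto
      rw [mul_zero] at h2
      refine h2.congr' ?_
      filter_upwards [self_mem_nhdsWithin] with t (ht : t ≠ 0)
      exact div_mul_cancel₀ _ (pow_ne_zero _ ht)
    have hc0 : c 0 = 0 := by
      have h2 : Tendsto (fun t : ℝ => ∑ j ∈ Finset.range (m+1+1), c j * t ^ j) (𝓝[≠] (0:ℝ)) (𝓝 (c 0)) := by
        rw [← hp0]
        exact (hcont.tendsto 0).mono_left nhdsWithin_le_nhds
      exact tendsto_nhds_unique h2 h1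
    have key : ∀ t : ℝ, (∑ j ∈ Finset.range (m+1+1), c j * t ^ j)
        = t * ∑ j ∈ Finset.range (m+1), c (j+1) * t ^ j := by
      intro t
      rw [Finset.sum_range_succ' (fun j => c j * t ^ j) (m+1), hc0, Finset.mul_sum]
      simp only [zero_mul, add_zero]
      exact Finset.sum_congr rfl (fun j _ => by ring)
    have hq : Tendsto (fun t : ℝ => (∑ j ∈ Finset.range (m+1), c (j+1) * t ^ j) / t ^ m)
        (𝓝[≠] (0:ℝ)) (𝓝 d) := by
      refine d_lim.congr' ?_
      filter_upwards [self_mem_nhdsWithin] with t (ht : t ≠ 0)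
      rw [key t, pow_succ, mul_comm (t ^ m) t, mul_div_mul_left _ _ ht]
    obtain ⟨h3, h4⟩ := ih (fun j => c (j+1)) d hq
    refine ⟨fun j hj => ?_, h4⟩
    cases j with
    | zero => exact hc0
    | succ k => exact h3 k (by omega)

lemma one_le_inf : (∞ : WithTop ℕ∞) ≠ 0 := by simp

lemma peano : ∀ (m : ℕ) (g : ℝ → ℝ) (U : Set ℝ), IsOpen U → (0:ℝ) ∈ U → ContDiffOn ℝ ∞ g U →
    Tendsto (fun t : ℝ => (g t - ∑ j ∈ Finset.range (m+1),
        iteratedDeriv j g 0 * t ^ j / (Nat.factorial j)) / t ^ m) (𝓝[≠] (0:ℝ)) (𝓝 0) := by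
  intro m
  induction m with
  | zero =>
    intro g U hU h0 hg
    simp only [Finset.range_one, Finset.sum_singleton, iteratedDeriv_zero, pow_zero, mul_one,
      Nat.factorial_zero, Nat.cast_one, div_one]
    have h1 : Tendsto g (𝓝[≠] (0:ℝ)) (𝓝 (g 0)) :=
      ((hg.continuousOn.continuousAt (hU.mem_nhds h0)).tendsto).mono_left nhdsWithin_le_nhds
    simpa using h1.sub_const (g 0)
  | succ m ih =>
    intro g U hU h0 hg
    set R : ℝ → ℝ := fun t => g t - ∑ j ∈ Finset.range (m+1+1),
      iteratedDeriv j g 0 * t ^ j / (Nat.factorial j) with hR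
    set R' : ℝ → ℝ := fun t => deriv g t - ∑ j ∈ Finset.range (m+1),
      iteratedDeriv j (deriv g) 0 * t ^ j / (Nat.factorial j) with hR'
    have hgd : ContDiffOn ℝ ∞ (deriv g) U := hg.deriv_of_isOpen hU (by simp)
    have hIH : Tendsto (fun t : ℝ => R' t / t ^ m) (𝓝[≠] (0:ℝ)) (𝓝 0) := ih (deriv g) U hU h0 hgd
    have hRd : ∀ t ∈ U, HasDerivAt R (R' t) t := by
      intro t ht
      have hgt : HasDerivAt g (deriv g t) t :=
        ((hg.contDiffAt (hU.mem_nhds ht)).differentiableAt one_le_inf).hasDerivAt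
      have hpoly : HasDerivAt (fun s : ℝ => ∑ j ∈ Finset.range (m+1+1),
            iteratedDeriv j g 0 * s ^ j / (Nat.factorial j))
          (∑ j ∈ Finset.range (m+1+1),
            iteratedDeriv j g 0 * ((j:ℝ) * t ^ (j-1)) / (Nat.factorial j)) t :=
        HasDerivAt.fun_sum (fun j _ => ((hasDerivAt_pow j t).const_mul (iteratedDeriv j g 0)).div_const _)
      have hsum : (∑ j ∈ Finset.range (m+1+1),
            iteratedDeriv j g 0 * ((j:ℝ) * t ^ (j-1)) / (Nat.factorial j))
          = ∑ j ∈ Finset.range (m+1), iteratedDeriv j (deriv g) 0 * t ^ j / (Nat.factorial j) := by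
        rw [Finset.sum_range_succ'
          (fun j => iteratedDeriv j g 0 * ((j:ℝ) * t ^ (j-1)) / (Nat.factorial j)) (m+1)]
        simp only [Nat.cast_zero, zero_mul, mul_zero, zero_div, add_zero]
        refine Finset.sum_congr rfl (fun j _ => ?_)
        have hid : iteratedDeriv j (deriv g) 0 = iteratedDeriv (j+1) g 0 := by
          rw [iteratedDeriv_succ']
        rw [hid]
        have h2 : ((Nat.factorial j : ℕ) : ℝ) ≠ 0 := by exact_mod_cast Nat.factorial_ne_zero j
        rw [Nat.factorial_succ]
        push_cast
        field_simp
      exact hgt.sub (hsum ▸ hpoly)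
    have hR0 : R 0 = 0 := by
      rw [hR]
      simp only
      rw [Finset.sum_range_succ'
        (fun j => iteratedDeriv j g 0 * (0:ℝ) ^ j / (Nat.factorial j)) (m+1)]
      simp [zero_pow, iteratedDeriv_zero]
    obtain ⟨δU, hδU, hballU⟩ := Metric.isOpen_iff.1 hU 0 h0
    rw [Metric.tendsto_nhdsWithin_nhds] at hIH ⊢
    intro ε hε
    obtain ⟨δ₁, hδ₁, hIH'⟩ := hIH ε hε
    refine ⟨min δ₁ δU, lt_min hδ₁ hδU, ?_⟩
    intro t ht hdist
    have htne : t ≠ 0 := ht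
    have htabs : |t| < min δ₁ δU := by rwa [Real.dist_eq, sub_zero] at hdist
    have hsub : ∀ x : ℝ, |x| ≤ |t| → x ∈ U := by
      intro x hx
      apply hballU
      rw [Metric.mem_ball, Real.dist_eq, sub_zero]
      exact lt_of_le_of_lt hx (lt_of_lt_of_le htabs (min_le_right _ _))
    have hmvt : ∃ ξ : ℝ, ξ ≠ 0 ∧ |ξ| < |t| ∧ R' ξ = R t / t := by
      rcases lt_or_gt_of_ne htne with hneg | hpos
      · have habs : ∀ x : ℝ, t ≤ x → x ≤ 0 → |x| ≤ |t| := by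
          intro x h1 h2
          rw [abs_of_neg hneg, abs_le]
          constructor <;> linarith
        have hcont : ContinuousOn R (Set.Icc t 0) := by
          intro x hx
          rw [Set.mem_Icc] at hx
          exact (hRd x (hsub x (habs x hx.1 hx.2))).continuousAt.continuousWithinAt
        have hder : ∀ x ∈ Set.Ioo t 0, HasDerivAt R (R' x) x := by
          intro x hx
          rw [Set.mem_Ioo] at hx
          exact hRd x (hsub x (habs x hx.1.le hx.2.le))
        obtain ⟨ξ, hξ, hξeq⟩ := exists_hasDerivAt_eq_slope R R' hneg hcont hder
        rw [Set.mem_Ioo] at hξ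
        refine ⟨ξ, ne_of_lt hξ.2, ?_, ?_⟩
        · rw [abs_of_neg hξ.2, abs_of_neg hneg]; linarith [hξ.1]
        · rw [hξeq, hR0, zero_sub, zero_sub, neg_div_neg_eq]
      · have habs : ∀ x : ℝ, 0 ≤ x → x ≤ t → |x| ≤ |t| := by
          intro x h1 h2
          rw [abs_of_pos hpos, abs_le]
          constructor <;> linarith
        have hcont : ContinuousOn R (Set.Icc 0 t) := by
          intro x hx
          rw [Set.mem_Icc] at hx
          exact (hRd x (hsub x (habs x hx.1 hx.2))).continuousAt.continuousWithinAt
        have hder : ∀ x ∈ Set.Ioo 0 t, HasDerivAt R (R' x) x := by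
          intro x hx
          rw [Set.mem_Ioo] at hx
          exact hRd x (hsub x (habs x hx.1.le hx.2.le))
        obtain ⟨ξ, hξ, hξeq⟩ := exists_hasDerivAt_eq_slope R R' hpos hcont hder
        rw [Set.mem_Ioo] at hξ
        refine ⟨ξ, ne_of_gt hξ.1, ?_, ?_⟩
        · rw [abs_of_pos hξ.1, abs_of_pos hpos]; exact hξ.2
        · rw [hξeq, hR0, sub_zero, sub_zero]
    obtain ⟨ξ, hξne, hξlt, hξeq⟩ := hmvt
    have hξδ : dist ξ 0 < δ₁ := by
      rw [Real.dist_eq, sub_zero]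
      exact lt_of_lt_of_le (lt_trans hξlt htabs) (min_le_left _ _)
    have hbound := hIH' hξne hξδ
    rw [Real.dist_eq, sub_zero] at hbound
    have hgoal : dist (R t / t ^ (m+1)) 0 < ε := by
      rw [Real.dist_eq, sub_zero]
      have hRt : R t / t ^ (m+1) = R' ξ / t ^ m := by
        have h5 : R t = R' ξ * t := by rw [hξeq, div_mul_cancel₀ _ htne]
        rw [h5, pow_succ]
        rw [mul_div_mul_right _ _ htne]
      rw [hRt]
      have h5 : |R' ξ / t ^ m| ≤ |R' ξ / ξ ^ m| := by
        rw [abs_div, abs_div, abs_pow, abs_pow]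
        gcongr |R' ξ| / ?_
        · exact pow_le_pow_left₀ (abs_nonneg _) (le_of_lt hξlt) m
      exact lt_of_le_of_lt h5 hbound
    exact hgoal

lemma der (g : ℝ → ℝ) (U : Set ℝ) (hU : IsOpen U) (h0 : (0:ℝ) ∈ U) (hg : ContDiffOn ℝ ∞ g U)
    (m : ℕ) (d : ℝ) (h : Tendsto (fun t : ℝ => g t / t ^ (m+1)) (𝓝[≠] (0:ℝ)) (𝓝 d)) :
    Tendsto (fun t : ℝ => deriv g t / t ^ m) (𝓝[≠] (0:ℝ)) (𝓝 ((m+1) * d)) := by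
  have hp := peano (m+1) g U hU h0 hg
  -- The Taylor polynomial of g divided by t^(m+1) tends to d
  have hpoly : Tendsto (fun t : ℝ => (∑ j ∈ Finset.range (m+1+1),
      (iteratedDeriv j g 0 / Nat.factorial j) * t ^ j) / t ^ (m+1)) (𝓝[≠] (0:ℝ)) (𝓝 d) := by
    have h2 := h.sub hp
    rw [sub_zero] at h2
    refine h2.congr (fun t => ?_)
    rw [div_sub_div_same]
    congr 1
    rw [sub_sub_cancel]
    exact Finset.sum_congr rfl (fun j _ => by ring)
  obtain ⟨hlow, htop⟩ := ext_poly (m+1) (fun j => iteratedDeriv j g 0 / Nat.factorial j) d hpoly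
  have hfac : ∀ j : ℕ, ((Nat.factorial j : ℕ) : ℝ) ≠ 0 :=
    fun j => by exact_mod_cast Nat.factorial_ne_zero j
  have hlow' : ∀ j < m+1, iteratedDeriv j g 0 = 0 := by
    intro j hj
    have := hlow j hj
    field_simp at this
    simpa using this
  have htop' : iteratedDeriv (m+1) g 0 = Nat.factorial (m+1) * d := by
    have := htop
    field_simp at this
    linarith [this]
  have hgd : ContDiffOn ℝ ∞ (deriv g) U := hg.deriv_of_isOpen hU (by simp)
  have hp' := peano m (deriv g) U hU h0 hgd
  have hsum : ∀ t : ℝ, (∑ j ∈ Finset.range (m+1),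
      iteratedDeriv j (deriv g) 0 * t ^ j / Nat.factorial j) = (m+1) * d * t ^ m := by
    intro t
    rw [Finset.sum_eq_single_of_mem m (Finset.self_mem_range_succ m)]
    · have hid : iteratedDeriv m (deriv g) 0 = iteratedDeriv (m+1) g 0 := by
        rw [iteratedDeriv_succ']
      rw [hid, htop', Nat.factorial_succ]
      push_cast
      field_simp
    · intro j hj hjm
      have : iteratedDeriv j (deriv g) 0 = iteratedDeriv (j+1) g 0 := by rw [iteratedDeriv_succ']
      rw [this, hlow' (j+1) (by rw [Finset.mem_range] at hj; omega)]
      simp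
  have hp'' : Tendsto (fun t : ℝ => (deriv g t - (m+1) * d * t ^ m) / t ^ m) (𝓝[≠] (0:ℝ)) (𝓝 0) := by
    refine hp'.congr (fun t => ?_)
    rw [hsum t]
  have hfinal := hp''.add_const ((m+1 : ℝ) * d)
  rw [zero_add] at hfinal
  refine hfinal.congr' ?_
  filter_upwards [self_mem_nhdsWithin] with t (ht : t ≠ 0)
  have htm : (t:ℝ) ^ m ≠ 0 := pow_ne_zero _ ht
  field_simp
  ring


section Helpers

lemma hasDerivAt_fst2 {f : ℝ → ℝ × ℝ} {f' : ℝ × ℝ} {x : ℝ} (h : HasDerivAt f f' x) :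
    HasDerivAt (fun t => (f t).1) f'.1 x :=
  (ContinuousLinearMap.fst ℝ ℝ ℝ).hasFDerivAt.comp_hasDerivAt x h

lemma hasDerivAt_snd2 {f : ℝ → ℝ × ℝ} {f' : ℝ × ℝ} {x : ℝ} (h : HasDerivAt f f' x) :
    HasDerivAt (fun t => (f t).2) f'.2 x :=
  (ContinuousLinearMap.snd ℝ ℝ ℝ).hasFDerivAt.comp_hasDerivAt x h

lemma cdOn_fst {f : ℝ → ℝ × ℝ} {s : Set ℝ} (hf : ContDiffOn ℝ ∞ f s) :
    ContDiffOn ℝ ∞ (fun t => (f t).1) s :=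
  contDiff_fst.comp_contDiffOn hf

lemma cdOn_snd {f : ℝ → ℝ × ℝ} {s : Set ℝ} (hf : ContDiffOn ℝ ∞ f s) :
    ContDiffOn ℝ ∞ (fun t => (f t).2) s :=
  contDiff_snd.comp_contDiffOn hf

lemma cdOn_rot {f : ℝ → ℝ × ℝ} {s : Set ℝ} (hf : ContDiffOn ℝ ∞ f s) :
    ContDiffOn ℝ ∞ (fun t => rot2 (f t)) s :=
  ContDiffOn.prodMk (cdOn_snd hf).neg (cdOn_fst hf)

lemma cdOn_dot {f g : ℝ → ℝ × ℝ} {s : Set ℝ} (hf : ContDiffOn ℝ ∞ f s)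
    (hg : ContDiffOn ℝ ∞ g s) : ContDiffOn ℝ ∞ (fun t => dot2 (f t) (g t)) s :=
  ((cdOn_fst hf).mul (cdOn_fst hg)).add ((cdOn_snd hf).mul (cdOn_snd hg))

lemma rot2_smul (c : ℝ) (u : ℝ × ℝ) : rot2 (c • u) = c • rot2 u := by
  simp [rot2, Prod.smul_def, mul_comm, smul_eq_mul]

lemma rot2_iterate_smul (k : ℕ) (c : ℝ) (u : ℝ × ℝ) :
    rot2^[k] (c • u) = c • rot2^[k] u := by
  induction k with
  | zero => rfl
  | succ k ih => rw [Function.iterate_succ_apply', Function.iterate_succ_apply', ih, rot2_smul]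

lemma rot2_rot2 (u : ℝ × ℝ) : rot2 (rot2 u) = -u := by
  simp [rot2, Prod.ext_iff]

lemma rot2_ne_zero {u : ℝ × ℝ} (hu : u ≠ 0) : rot2 u ≠ 0 := by
  simp only [rot2, Prod.ext_iff, ne_eq, Prod.fst_zero, Prod.snd_zero, neg_eq_zero] at *
  tauto

lemma rot2_iterate_ne_zero {u : ℝ × ℝ} (hu : u ≠ 0) (k : ℕ) : rot2^[k] u ≠ 0 := by
  induction k with
  | zero => exact hu
  | succ k ih => rw [Function.iterate_succ_apply']; exact rot2_ne_zero ih

lemma hasDerivAt_rot_iterate {f : ℝ → ℝ × ℝ} {f' : ℝ × ℝ} {x : ℝ} (k : ℕ)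
    (h : HasDerivAt f f' x) : HasDerivAt (fun t => rot2^[k] (f t)) (rot2^[k] f') x := by
  induction k with
  | zero => simpa using h
  | succ k ih =>
    simp only [Function.iterate_succ_apply']
    exact HasDerivAt.prodMk (hasDerivAt_snd2 ih).neg (hasDerivAt_fst2 ih)

/-- Orthonormal decomposition: if `a² + b² = 1` then any `w` equals
`(w·ν)ν + (w·μ)μ` where `ν = (a,b)`, `μ = (-b,a)`. -/
lemma decomp2 (a b : ℝ) (hab : a^2 + b^2 = 1) (w : ℝ × ℝ) :
    w = dot2 w (a, b) • (a, b) + dot2 w (-b, a) • (-b, a) := by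
  simp only [dot2, Prod.ext_iff, Prod.smul_def, smul_eq_mul, Prod.fst_add, Prod.snd_add]
  constructor
  · linear_combination (-w.1) * hab
  · linear_combination (-w.2) * hab

end Helpers

/-- If `γ` is 𝒜-equivalent at `t = 0` to the `(n,n+1)`-cusp, then
`t = 0` is a singular point of the evolutes `Ev¹(γ), …, Ev^{n-2}(γ)` and a regular
point of `Ev^{n-1}(γ)`. -/
theorem stmt_3 (n : ℕ) (hn : 3 ≤ n) (I : Set ℝ) (hI : IsOpen I) (hI0 : (0 : ℝ) ∈ I)
    (γ ν : ℝ → ℝ × ℝ) (hLeg : IsLegendreImmersionOn γ ν I)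
    (hnoinfl : ∀ t ∈ I, ell ν t ≠ 0)
    (hcusp : CEquivAt0 ∞ γ (fun t => (t ^ n, t ^ (n + 1)))) :
    (∀ i, 1 ≤ i → i ≤ n - 2 → deriv (evolute γ ν i) 0 = 0) ∧
      deriv (evolute γ ν (n - 1)) 0 ≠ 0 := by
  obtain ⟨hγs, hνs, hνnorm, hortho, himm⟩ := hLeg
  obtain ⟨hγ0, hc0, ψ, ψinv, Ψ, Ψinv, ⟨hψ0, hψinv0, hψcd, hψinvcd, hψl, hψr⟩,
    ⟨hΨ0, hΨinv0, hΨcd, hΨinvcd, hΨl, hΨr⟩, hcomm⟩ := hcusp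
  obtain ⟨p, rfl⟩ : ∃ p, n = p + 3 := ⟨n - 3, by omega⟩
  clear hn
  have hInhds : I ∈ 𝓝 (0:ℝ) := hI.mem_nhds hI0
  have hl0 : ell ν 0 ≠ 0 := hnoinfl 0 hI0
  -- ## Smoothness bookkeeping
  have hγd : ContDiffOn ℝ ∞ (deriv γ) I := hγs.deriv_of_isOpen hI (by simp)
  have hνd : ContDiffOn ℝ ∞ (deriv ν) I := hνs.deriv_of_isOpen hI (by simp)
  have hellI : ContDiffOn ℝ ∞ (ell ν) I := cdOn_dot hνd (cdOn_rot hνs)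
  have hbetI : ∀ k, ContDiffOn ℝ ∞ (bet γ ν k) I := by
    intro k
    induction k with
    | zero => exact cdOn_dot hγd (cdOn_rot hνs)
    | succ k ih =>
      have hdiv : ContDiffOn ℝ ∞ (fun t => bet γ ν k t / ell ν t) I :=
        ih.div hellI hnoinfl
      exact hdiv.deriv_of_isOpen hI (by simp)
  have hbetdivI : ∀ k, ContDiffOn ℝ ∞ (fun t => bet γ ν k t / ell ν t) I :=
    fun k => (hbetI k).div hellI hnoinfl
  -- ## The derivative of ψ at 0 is nonzero
  have hψdiff : DifferentiableAt ℝ ψ 0 := hψcd.differentiableAt one_le_inf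
  have hψinvdiff : DifferentiableAt ℝ ψinv 0 := hψinvcd.differentiableAt one_le_inf
  have ha : deriv ψ 0 ≠ 0 := by
    have h1 : deriv (ψinv ∘ ψ) 0 = 1 := by
      have h2 : (ψinv ∘ ψ) =ᶠ[𝓝 (0:ℝ)] id := hψl
      rw [h2.deriv_eq]
      exact deriv_id 0
    have h3 : deriv (ψinv ∘ ψ) 0 = deriv ψinv (ψ 0) * deriv ψ 0 :=
      deriv_comp (x := 0) (by rw [hψ0]; exact hψinvdiff) hψdiff
    intro hcontra
    rw [h3, hcontra, mul_zero] at h1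
    exact zero_ne_one h1
  set a : ℝ := deriv ψ 0 with haa
  -- ## slope asymptotics of ψ
  have hψslope : Tendsto (fun t => ψ t / t) (𝓝[≠] (0:ℝ)) (𝓝 a) := by
    have h1 := hψdiff.hasDerivAt
    rw [hasDerivAt_iff_tendsto_slope] at h1
    refine h1.congr (fun t => ?_)
    rw [slope_def_field, hψ0, sub_zero, sub_zero]
  have hψto0 : Tendsto ψ (𝓝 (0:ℝ)) (𝓝 0) := by
    have := hψcd.continuousAt.tendsto
    rwa [hψ0] at this
  have hψto0' : Tendsto ψ (𝓝[≠] (0:ℝ)) (𝓝 0) := hψto0.mono_left nhdsWithin_le_nhds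
  -- ## The cusp composition
  set F : ℝ → ℝ × ℝ := fun t => ((ψ t) ^ (p+3), (ψ t) ^ (p+3+1)) with hF
  have hcomm' : ∀ᶠ t in 𝓝 (0:ℝ), Ψ (γ t) = F t := hcomm
  have hF1 : Tendsto (fun t => (ψ t) ^ (p+3) / t ^ (p+3)) (𝓝[≠] (0:ℝ)) (𝓝 (a ^ (p+3))) := by
    refine (hψslope.pow (p+3)).congr (fun t => ?_)
    rw [div_pow]
  have hF2 : Tendsto (fun t => (ψ t) ^ (p+3+1) / t ^ (p+3)) (𝓝[≠] (0:ℝ)) (𝓝 0) := by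
    have h1 := (hψslope.pow (p+3)).mul hψto0'
    rw [mul_zero] at h1
    refine h1.congr (fun t => ?_)
    rw [div_pow, div_mul_eq_mul_div, ← pow_succ]
  have hγcont : ContinuousAt γ 0 := hγs.continuousOn.continuousAt hInhds
  have hγto0 : Tendsto γ (𝓝 (0:ℝ)) (𝓝 (0 : ℝ × ℝ)) := by
    have := hγcont.tendsto; rwa [hγ0] at this
  have hγF : γ =ᶠ[𝓝 (0:ℝ)] fun t => Ψinv (F t) := by
    filter_upwards [hcomm', hγto0.eventually hΨl] with t h1 h2
    rw [← h1, h2]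
  set B := fderiv ℝ Ψinv 0 with hBB
  have hB : HasFDerivAt Ψinv B 0 := (hΨinvcd.differentiableAt one_le_inf).hasFDerivAt
  have hAB : ∀ w, fderiv ℝ Ψ 0 (B w) = w := by
    have h1 : (Ψ ∘ Ψinv) =ᶠ[𝓝 (0 : ℝ × ℝ)] id := hΨr
    have h2 : fderiv ℝ (Ψ ∘ Ψinv) 0 = ContinuousLinearMap.id ℝ (ℝ × ℝ) := by
      rw [h1.fderiv_eq]; exact fderiv_id
    have h3 : fderiv ℝ (Ψ ∘ Ψinv) 0 = (fderiv ℝ Ψ (Ψinv 0)).comp (fderiv ℝ Ψinv 0) :=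
      fderiv_comp (x := 0) (by rw [hΨinv0]; exact hΨcd.differentiableAt one_le_inf)
        (hΨinvcd.differentiableAt one_le_inf)
    intro w
    have h4 := congrArg (fun L => L w) (h3.symm.trans h2)
    simpa [hΨinv0] using h4
  set v : ℝ × ℝ := B (a ^ (p+3), 0) with hvv
  have hv : v ≠ 0 := by
    intro hcontra
    have h1 := hAB (a ^ (p+3), 0)
    rw [← hvv] at h1
    rw [hcontra] at h1
    simp only [map_zero] at h1
    have := congrArg Prod.fst h1
    simp at this
    exact pow_ne_zero (p+3) ha this.symm
  -- ## asymptotics of F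
  have hFasym : Tendsto (fun t => (t ^ (p+3))⁻¹ • F t) (𝓝[≠] (0:ℝ)) (𝓝 ((a ^ (p+3), 0) : ℝ × ℝ)) := by
    have h1 := hF1.prodMk_nhds hF2
    refine h1.congr (fun t => ?_)
    simp only [hF, Prod.smul_def, smul_eq_mul]
    rw [div_eq_inv_mul, div_eq_inv_mul]
  have hFto0 : Tendsto F (𝓝[≠] (0:ℝ)) (𝓝 (0 : ℝ × ℝ)) := by
    have h1 : Tendsto (fun t => (ψ t) ^ (p+3)) (𝓝[≠] (0:ℝ)) (𝓝 0) := by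
      simpa using hψto0'.pow (p+3)
    have h2 : Tendsto (fun t => (ψ t) ^ (p+3+1)) (𝓝[≠] (0:ℝ)) (𝓝 0) := by
      simpa using hψto0'.pow (p+3+1)
    exact h1.prodMk_nhds h2
  have hFbig : F =O[𝓝[≠] (0:ℝ)] fun t => t ^ (p+3) := by
    rw [Asymptotics.isBigO_iff]
    refine ⟨‖((a ^ (p+3), 0) : ℝ × ℝ)‖ + 1, ?_⟩
    filter_upwards [self_mem_nhdsWithin,
      hFasym.norm.eventually_lt_const (lt_add_one _)] with t ht hlt
    have ht' : (t : ℝ) ^ (p+3) ≠ 0 := pow_ne_zero _ ht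
    have : F t = (t ^ (p+3)) • ((t ^ (p+3))⁻¹ • F t) := by
      rw [smul_inv_smul₀ ht']
    rw [this, norm_smul, mul_comm]
    exact mul_le_mul_of_nonneg_right hlt.le (norm_nonneg _)
  have hlittle : (fun t => Ψinv (F t) - B (F t)) =o[𝓝[≠] (0:ℝ)] fun t => t ^ (p+3) := by
    have h1 := hB.isLittleO
    have h2 : (fun x => Ψinv x - B x) =o[𝓝 (0 : ℝ × ℝ)] fun x => x := by
      refine h1.congr (fun x => ?_) (fun x => ?_)
      · rw [hΨinv0, sub_zero, sub_zero]
      · rw [sub_zero]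
    exact (h2.comp_tendsto hFto0).trans_isBigO hFbig
  have htail : Tendsto (fun t => (t ^ (p+3))⁻¹ • (Ψinv (F t) - B (F t))) (𝓝[≠] (0:ℝ))
      (𝓝 (0 : ℝ × ℝ)) := by
    rw [tendsto_zero_iff_norm_tendsto_zero]
    have h1 : Tendsto (fun t => ‖Ψinv (F t) - B (F t)‖ / ‖(t:ℝ) ^ (p+3)‖) (𝓝[≠] (0:ℝ)) (𝓝 0) :=
      hlittle.norm_norm.tendsto_div_nhds_zero
    refine h1.congr' ?_
    filter_upwards [self_mem_nhdsWithin] with t (ht : t ≠ 0)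
    rw [norm_smul, norm_inv, div_eq_inv_mul]
  have hlin : Tendsto (fun t => (t ^ (p+3))⁻¹ • B (F t)) (𝓝[≠] (0:ℝ)) (𝓝 v) := by
    have h1 := (B.continuous.tendsto _).comp hFasym
    refine h1.congr (fun t => ?_)
    simp only [Function.comp_apply, map_smul]
  have hγasym : Tendsto (fun t => (t ^ (p+3))⁻¹ • γ t) (𝓝[≠] (0:ℝ)) (𝓝 v) := by
    have h1 := htail.add hlin
    rw [zero_add] at h1
    refine h1.congr' ?_
    filter_upwards [hγF.filter_mono nhdsWithin_le_nhds] with t ht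
    rw [← smul_add, sub_add_cancel, ← ht]
  -- ## derivative of γ components
  have hγdiffat : ∀ t ∈ I, HasDerivAt γ (deriv γ t) t := fun t ht =>
    ((hγs.contDiffAt (hI.mem_nhds ht)).differentiableAt one_le_inf).hasDerivAt
  have hγ1asym : Tendsto (fun t => (γ t).1 / t ^ (p+3)) (𝓝[≠] (0:ℝ)) (𝓝 v.1) := by
    have h1 := (continuous_fst.tendsto v).comp hγasym
    refine h1.congr (fun t => ?_)
    simp only [Function.comp_apply, Prod.smul_def, smul_eq_mul]
    rw [div_eq_inv_mul]
  have hγ2asym : Tendsto (fun t => (γ t).2 / t ^ (p+3)) (𝓝[≠] (0:ℝ)) (𝓝 v.2) := by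
    have h1 := (continuous_snd.tendsto v).comp hγasym
    refine h1.congr (fun t => ?_)
    simp only [Function.comp_apply, Prod.smul_def, smul_eq_mul]
    rw [div_eq_inv_mul]
  have hcast : ((p+2 : ℕ) : ℝ) + 1 = (p:ℝ)+3 := by push_cast; ring
  have hd1 : Tendsto (fun t => (deriv γ t).1 / t ^ (p+2)) (𝓝[≠] (0:ℝ))
      (𝓝 (((p:ℝ)+3) * v.1)) := by
    have h1 := der (fun t => (γ t).1) I hI hI0 (cdOn_fst hγs) (p+2) v.1 hγ1asym
    rw [← hcast]
    refine h1.congr' ?_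
    filter_upwards [nhdsWithin_le_nhds hInhds] with t ht
    rw [(hasDerivAt_fst2 (hγdiffat t ht)).deriv]
  have hd2 : Tendsto (fun t => (deriv γ t).2 / t ^ (p+2)) (𝓝[≠] (0:ℝ))
      (𝓝 (((p:ℝ)+3) * v.2)) := by
    have h1 := der (fun t => (γ t).2) I hI hI0 (cdOn_snd hγs) (p+2) v.2 hγ2asym
    rw [← hcast]
    refine h1.congr' ?_
    filter_upwards [nhdsWithin_le_nhds hInhds] with t ht
    rw [(hasDerivAt_snd2 (hγdiffat t ht)).deriv]
  -- ## continuity of ν at 0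
  have hνcont : ContinuousAt ν 0 := hνs.continuousOn.continuousAt hInhds
  have hν1cont : Tendsto (fun t => (ν t).1) (𝓝[≠] (0:ℝ)) (𝓝 (ν 0).1) :=
    ((continuous_fst.continuousAt.comp hνcont).tendsto).mono_left nhdsWithin_le_nhds
  have hν2cont : Tendsto (fun t => (ν t).2) (𝓝[≠] (0:ℝ)) (𝓝 (ν 0).2) :=
    ((continuous_snd.continuousAt.comp hνcont).tendsto).mono_left nhdsWithin_le_nhds
  -- ## asymptotics of β₀
  set b : ℝ := ((p:ℝ)+3) * v.1 * (-(ν 0).2) + ((p:ℝ)+3) * v.2 * (ν 0).1 with hbb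
  have hbet0asym : Tendsto (fun t => bet γ ν 0 t / t ^ (p+2)) (𝓝[≠] (0:ℝ)) (𝓝 b) := by
    have h1 := (hd1.mul hν2cont.neg).add (hd2.mul hν1cont)
    refine h1.congr (fun t => ?_)
    simp only [bet, dot2, rot2]
    ring
  -- ## v is orthogonal to ν 0
  have hvs : dot2 v (ν 0) = 0 := by
    have h1 := (hd1.mul hν1cont).add (hd2.mul hν2cont)
    have h2 : Tendsto (fun t => (deriv γ t).1 / t ^ (p+2) * (ν t).1
        + (deriv γ t).2 / t ^ (p+2) * (ν t).2) (𝓝[≠] (0:ℝ)) (𝓝 0) := by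
      refine Tendsto.congr' ?_ (tendsto_const_nhds : Tendsto (fun _ : ℝ => (0:ℝ)) _ _)
      filter_upwards [nhdsWithin_le_nhds hInhds] with t ht
      have h3 := hortho t ht
      simp only [dot2] at h3
      rw [div_mul_eq_mul_div, div_mul_eq_mul_div, ← add_div, h3, zero_div]
    have h4 := tendsto_nhds_unique h1 h2
    have hp3 : ((p:ℝ)+3) ≠ 0 := by positivity
    simp only [dot2]
    have h5 : ((p:ℝ)+3) * (v.1 * (ν 0).1 + v.2 * (ν 0).2) = 0 := by linear_combination h4
    rcases mul_eq_zero.1 h5 with h | h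
    · exact absurd h hp3
    · exact h
  have hab : (ν 0).1 ^ 2 + (ν 0).2 ^ 2 = 1 :=
    Real.sqrt_eq_one.mp (hνnorm 0 hI0)
  have hν0ne : ν 0 ≠ (0 : ℝ × ℝ) := by
    intro hcontra
    rw [hcontra] at hab
    norm_num at hab
  have hbne : b ≠ 0 := by
    intro hcontra
    have hdot : dot2 v (rot2 (ν 0)) = 0 := by
      have hp3 : ((p:ℝ)+3) ≠ 0 := by positivity
      simp only [dot2, rot2]
      have h5 : ((p:ℝ)+3) * (v.1 * (-(ν 0).2) + v.2 * (ν 0).1) = 0 := by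
        rw [hbb] at hcontra
        linear_combination hcontra
      rcases mul_eq_zero.1 h5 with h | h
      · exact absurd h hp3
      · exact h
    have hdec := decomp2 (ν 0).1 (ν 0).2 hab v
    rw [Prod.mk.eta] at hdec
    have hμ : ((-(ν 0).2, (ν 0).1) : ℝ × ℝ) = rot2 (ν 0) := rfl
    rw [hμ, hvs, hdot, zero_smul, zero_smul, add_zero] at hdec
    exact hv hdec
  -- ## continuity of ell at 0
  have hℓcont : Tendsto (ell ν) (𝓝[≠] (0:ℝ)) (𝓝 (ell ν 0)) :=
    (hellI.continuousOn.continuousAt hInhds).tendsto.mono_left nhdsWithin_le_nhds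
  -- ## Main asymptotic claim
  have hclaim : ∀ j, j ≤ p+2 → ∃ c : ℝ, c ≠ 0 ∧
      Tendsto (fun t => bet γ ν j t / t ^ (p+2-j)) (𝓝[≠] (0:ℝ)) (𝓝 c) := by
    intro j
    induction j with
    | zero => exact fun _ => ⟨b, hbne, hbet0asym⟩
    | succ j ih =>
      intro hj
      obtain ⟨c, hc, hcl⟩ := ih (by omega)
      set m : ℕ := p+2-(j+1) with hmm
      have hm : p+2-j = m+1 := by omega
      rw [hm] at hcl
      have hquot : Tendsto (fun t => (bet γ ν j t / ell ν t) / t ^ (m+1)) (𝓝[≠] (0:ℝ))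
          (𝓝 (c / ell ν 0)) := by
        have h1 := hcl.mul (hℓcont.inv₀ hl0)
        have h2 : c * (ell ν 0)⁻¹ = c / ell ν 0 := by rw [div_eq_mul_inv]
        rw [h2] at h1
        refine h1.congr (fun t => ?_)
        rw [← div_eq_mul_inv, div_right_comm]
      have hnew := der (fun t => bet γ ν j t / ell ν t) I hI hI0 (hbetdivI j) m
        (c / ell ν 0) hquot
      refine ⟨((m:ℝ)+1) * (c / ell ν 0),
        mul_ne_zero (by positivity) (div_ne_zero hc hl0), ?_⟩
      have hfun : bet γ ν (j+1) = fun t => deriv (fun s => bet γ ν j s / ell ν s) t := rfl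
      rw [hfun]
      exact_mod_cast hnew
  -- ## values of bet at 0
  have hbetcont : ∀ k, Tendsto (bet γ ν k) (𝓝[≠] (0:ℝ)) (𝓝 (bet γ ν k 0)) := fun k =>
    ((hbetI k).continuousOn.continuousAt hInhds).tendsto.mono_left nhdsWithin_le_nhds
  have hbetval : ∀ j, j ≤ p+1 → bet γ ν j 0 = 0 := by
    intro j hj
    obtain ⟨c, hc, hcl⟩ := hclaim j (by omega)
    have he : p+2-j ≠ 0 := by omega
    have h1 : Tendsto (fun t => (bet γ ν j t / t ^ (p+2-j)) * t ^ (p+2-j))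
        (𝓝[≠] (0:ℝ)) (𝓝 (c * 0)) := by
      refine hcl.mul ?_
      have := ((continuous_pow (p+2-j)).tendsto (0:ℝ)).mono_left
        (nhdsWithin_le_nhds : 𝓝[≠](0:ℝ) ≤ 𝓝 0)
      simpa [zero_pow he] using this
    rw [mul_zero] at h1
    have h2 : Tendsto (bet γ ν j) (𝓝[≠] (0:ℝ)) (𝓝 0) := by
      refine h1.congr' ?_
      filter_upwards [self_mem_nhdsWithin] with t (ht : t ≠ 0)
      rw [div_mul_cancel₀ _ (pow_ne_zero _ ht)]
    exact tendsto_nhds_unique (hbetcont j) h2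
  have hbettop : bet γ ν (p+2) 0 ≠ 0 := by
    obtain ⟨c, hc, hcl⟩ := hclaim (p+2) le_rfl
    have he : p+2-(p+2) = 0 := by omega
    rw [he] at hcl
    simp only [pow_zero, div_one] at hcl
    rw [tendsto_nhds_unique (hbetcont (p+2)) hcl]
    exact hc
  -- ## deriv γ 0 = 0
  have hγd00 : deriv γ 0 = 0 := by
    have hpow : Tendsto (fun t : ℝ => t ^ (p+2)) (𝓝[≠] (0:ℝ)) (𝓝 0) := by
      have := ((continuous_pow (p+2)).tendsto (0:ℝ)).mono_left
        (nhdsWithin_le_nhds : 𝓝[≠](0:ℝ) ≤ 𝓝 0)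
      simpa [zero_pow] using this
    have h1 : Tendsto (fun t : ℝ => t ^ (p+2) • ((t ^ (p+3))⁻¹ • γ t)) (𝓝[≠] (0:ℝ))
        (𝓝 ((0:ℝ) • v)) := hpow.smul hγasym
    rw [zero_smul] at h1
    have h2 : Tendsto (slope γ 0) (𝓝[≠] (0:ℝ)) (𝓝 (0 : ℝ × ℝ)) := by
      refine h1.congr' ?_
      filter_upwards [self_mem_nhdsWithin] with t (ht : t ≠ 0)
      rw [slope_def_module, hγ0, sub_zero, sub_zero, smul_smul]
      congr 1
      rw [pow_succ]
      field_simp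
      ring
    have h3 := (hγdiffat 0 hI0)
    rw [hasDerivAt_iff_tendsto_slope] at h3
    exact tendsto_nhds_unique h3 h2
  have hbet00 : bet γ ν 0 0 = 0 := by
    have : bet γ ν 0 0 = dot2 (deriv γ 0) (rot2 (ν 0)) := rfl
    rw [this, hγd00]
    simp [dot2, rot2]
  -- ## deriv ν 0 is ell • rot2 ν
  have hν0has : HasDerivAt ν (deriv ν 0) 0 :=
    ((hνs.contDiffAt hInhds).differentiableAt one_le_inf).hasDerivAt
  have hννd : dot2 (deriv ν 0) (ν 0) = 0 := by
    have hconst : (fun t => (ν t).1 ^ 2 + (ν t).2 ^ 2) =ᶠ[𝓝 (0:ℝ)] fun _ => 1 := by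
      filter_upwards [hInhds] with t ht
      exact Real.sqrt_eq_one.mp (hνnorm t ht)
    have hd0 : deriv (fun t => (ν t).1 ^ 2 + (ν t).2 ^ 2) 0 = 0 := by
      rw [hconst.deriv_eq]; simp
    have hhd : HasDerivAt (fun t => (ν t).1 ^ 2 + (ν t).2 ^ 2)
        ((2:ℕ) * (ν 0).1 ^ 1 * (deriv ν 0).1 + (2:ℕ) * (ν 0).2 ^ 1 * (deriv ν 0).2) 0 :=
      ((hasDerivAt_fst2 hν0has).pow 2).add ((hasDerivAt_snd2 hν0has).pow 2)
    have hval := hhd.deriv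
    rw [hd0] at hval
    simp only [dot2]
    push_cast at hval
    nlinarith [hval]
  have hν'0 : deriv ν 0 = ell ν 0 • rot2 (ν 0) := by
    have hdec := decomp2 (ν 0).1 (ν 0).2 hab (deriv ν 0)
    rw [Prod.mk.eta] at hdec
    have hμ : ((-(ν 0).2, (ν 0).1) : ℝ × ℝ) = rot2 (ν 0) := rfl
    rw [hμ, hννd, zero_smul, zero_add] at hdec
    exact hdec
  -- ## derivatives of the pieces
  have hβℓ : ∀ k, HasDerivAt (fun s => bet γ ν k s / ell ν s) (bet γ ν (k+1) 0) 0 := by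
    intro k
    have h1 := (((hbetdivI k).contDiffAt hInhds).differentiableAt one_le_inf).hasDerivAt
    exact h1
  have hrotν : ∀ k, HasDerivAt (fun t => rot2^[k] (ν t)) (rot2^[k] (deriv ν 0)) 0 :=
    fun k => hasDerivAt_rot_iterate k hν0has
  have hsmul : ∀ k, HasDerivAt (fun t => (bet γ ν k t / ell ν t) • rot2^[k] (ν t))
      ((bet γ ν k 0 / ell ν 0) • rot2^[k] (deriv ν 0)
        + bet γ ν (k+1) 0 • rot2^[k] (ν 0)) 0 :=
    fun k => (hβℓ k).smul (hrotν k)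
  have hQ : ∀ j, HasDerivAt (evolute γ ν (j+1)) (-(bet γ ν (j+1) 0) • rot2^[j] (ν 0)) 0 := by
    intro j
    induction j with
    | zero =>
      have h2 := (hγdiffat 0 hI0).sub (hsmul 0)
      have hval : deriv γ 0 - ((bet γ ν 0 0 / ell ν 0) • rot2^[0] (deriv ν 0)
          + bet γ ν (0+1) 0 • rot2^[0] (ν 0)) = -(bet γ ν (0+1) 0) • rot2^[0] (ν 0) := by
        rw [hγd00, hbet00, zero_div, zero_smul, zero_add, zero_sub, neg_smul]
      rw [hval] at h2
      exact h2
    | succ j ih =>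
      have h2 := ih.sub (hsmul (j+1))
      have hval : (-(bet γ ν (j+1) 0) • rot2^[j] (ν 0))
          - ((bet γ ν (j+1) 0 / ell ν 0) • rot2^[j+1] (deriv ν 0)
            + bet γ ν (j+1+1) 0 • rot2^[j+1] (ν 0))
          = -(bet γ ν (j+1+1) 0) • rot2^[j+1] (ν 0) := by
        rw [hν'0, rot2_iterate_smul, smul_smul, div_mul_cancel₀ _ hl0]
        have h3 : rot2^[j+1] (rot2 (ν 0)) = - rot2^[j] (ν 0) := by
          rw [← Function.iterate_succ_apply, Function.iterate_succ_apply',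
            Function.iterate_succ_apply', rot2_rot2]
        rw [h3, neg_smul, neg_smul, smul_neg]
        abel
      rw [hval] at h2
      exact h2
  -- ## Final assembly
  constructor
  · intro i h1 h2
    obtain ⟨j, rfl⟩ : ∃ j, i = j+1 := ⟨i-1, by omega⟩
    rw [(hQ j).deriv, hbetval (j+1) (by omega), neg_zero, zero_smul]
  · have h3 := (hQ (p+1)).deriv
    rw [show p+3-1 = p+1+1 from rfl, h3]
    exact smul_ne_zero (neg_ne_zero.2 hbettop) (rot2_iterate_ne_zero hν0ne (p+1))
end

section
/- Let γ : I → ℝ² be a C^∞ curve on an open interval I containing 0 with γ(0) = 0 and γ'(0) = γ''(0) = γ'''(0) = 0, and let Φ : (ℝ², 0) → (ℝ², 0) be a C^∞ diffeomorphism germ. Set γ̂ = Φ ∘ γ, and let Â, B̂, Ĉ, D̂ be defined for γ̂ in the same way as A, B, C, D are defined for γ. Then −77B̂² + 105ÂD̂ + 60ÂĈ = (det DΦ(0))² · (−77B² + 105AD + 60AC), where DΦ(0) is the Jacobian matrix of Φ at the origin. -/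
open Filter Topology
open scoped ContDiff

/-- `A = det(γ⁽⁵⁾(0), γ⁽⁴⁾(0))`. -/
noncomputable def Adet (γ : ℝ → ℝ × ℝ) : ℝ := det2 (iteratedDeriv 5 γ 0) (iteratedDeriv 4 γ 0)

/-- `B = det(γ⁽⁶⁾(0), γ⁽⁴⁾(0))`. -/
noncomputable def Bdet (γ : ℝ → ℝ × ℝ) : ℝ := det2 (iteratedDeriv 6 γ 0) (iteratedDeriv 4 γ 0)

/-- `C = det(γ⁽⁷⁾(0), γ⁽⁴⁾(0))`. -/
noncomputable def Cdet (γ : ℝ → ℝ × ℝ) : ℝ := det2 (iteratedDeriv 7 γ 0) (iteratedDeriv 4 γ 0)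

/-- `D = det(γ⁽⁶⁾(0), γ⁽⁵⁾(0))`. -/
noncomputable def Ddet (γ : ℝ → ℝ × ℝ) : ℝ := det2 (iteratedDeriv 6 γ 0) (iteratedDeriv 5 γ 0)

/-- The expression `−77B² + 105AD + 60AC`. -/
noncomputable def cuspInv45 (γ : ℝ → ℝ × ℝ) : ℝ :=
  -77 * Bdet γ ^ 2 + 105 * Adet γ * Ddet γ + 60 * Adet γ * Cdet γ

-- helper: within-to-plain for iteratedDeriv on open set
lemma my_iteratedDerivWithin_of_isOpen {F : Type*} [NormedAddCommGroup F] [NormedSpace ℝ F]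
    {s : Set ℝ} (hs : IsOpen s) {x : ℝ} (hx : x ∈ s) (n : ℕ) (f : ℝ → F) :
    iteratedDerivWithin n f s x = iteratedDeriv n f x := by
  rw [iteratedDerivWithin_eq_iteratedFDerivWithin, iteratedDeriv_eq_iteratedFDeriv,
    iteratedFDerivWithin_of_isOpen n hs hx]

-- key vanishing lemma
lemma my_key_zero (s : Set ℝ) (hs : IsOpen s) (h0s : (0:ℝ) ∈ s)
    (u : Set (ℝ×ℝ)) (hu : IsOpen u)
    (γ : ℝ → ℝ × ℝ) (hγ : ContDiffOn ℝ 7 γ s) (hmaps : Set.MapsTo γ s u)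
    (Q : ℝ×ℝ → ℝ×ℝ) (hQ : ContDiffOn ℝ 7 Q u)
    (hQ1 : fderiv ℝ Q (γ 0) = 0)
    (h1 : iteratedDeriv 1 γ 0 = 0) (h2 : iteratedDeriv 2 γ 0 = 0)
    (h3 : iteratedDeriv 3 γ 0 = 0)
    (n : ℕ) (hn1 : 1 ≤ n) (hn : n ≤ 7) :
    iteratedDeriv n (Q ∘ γ) 0 = 0 := by
  have hsu : UniqueDiffOn ℝ s := hs.uniqueDiffOn
  have huu : UniqueDiffOn ℝ u := hu.uniqueDiffOn
  have hp := hγ.ftaylorSeriesWithin hsu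
  have hq := hQ.ftaylorSeriesWithin huu
  have hcomp := hq.comp hp hmaps
  have hmn : (n : WithTop ℕ∞) ≤ 7 := by exact_mod_cast hn
  rw [iteratedDeriv_eq_iteratedFDeriv, ← iteratedFDerivWithin_of_isOpen n hs h0s,
    ← hcomp.eq_iteratedFDerivWithin_of_uniqueDiffOn hmn hsu h0s]
  rw [show ((ftaylorSeriesWithin ℝ Q u (γ 0)).taylorComp (ftaylorSeriesWithin ℝ γ s 0) n)
    = ∑ c : OrderedFinpartition n,
        ((ftaylorSeriesWithin ℝ Q u) (γ 0)).compAlongOrderedFinpartition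
          ((ftaylorSeriesWithin ℝ γ s) 0) c from rfl]
  rw [ContinuousMultilinearMap.sum_apply]
  apply Finset.sum_eq_zero
  intro c _
  by_cases hpart : ∃ i, c.partSize i ≤ 3
  · obtain ⟨i, hi⟩ := hpart
    apply ContinuousMultilinearMap.map_coord_zero _ i
    show (ftaylorSeriesWithin ℝ γ s 0 (c.partSize i)) ((fun _ : Fin n ↦ (1:ℝ)) ∘ c.emb i) = 0
    rw [show ftaylorSeriesWithin ℝ γ s 0 (c.partSize i)
        = iteratedFDerivWithin ℝ (c.partSize i) γ s 0 from rfl,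
      iteratedFDerivWithin_of_isOpen _ hs h0s,
      iteratedFDeriv_apply_eq_iteratedDeriv_mul_prod]
    have hpos := c.partSize_pos i
    have hz : iteratedDeriv (c.partSize i) γ 0 = 0 := by
      interval_cases h : c.partSize i
      · exact h1
      · exact h2
      · exact h3
    rw [hz, smul_zero]
  · push_neg at hpart
    have hlen1 : c.length = 1 := by
      have hpos : 0 < c.length := c.length_pos (by omega)
      by_contra hne
      have h2le : 2 ≤ c.length := by omega
      have hsum : ∑ i, c.partSize i = n := by
        have := Fintype.card_congr c.equivSigma
        simpa [Fintype.card_sigma] using this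
      have hmul : c.length * 4 ≤ ∑ i, c.partSize i := by
        calc c.length * 4 = ∑ _i : Fin c.length, 4 := by simp [Finset.sum_const, mul_comm]
        _ ≤ _ := Finset.sum_le_sum fun i _ => hpart i
      have hmul2 : 2 * 4 ≤ c.length * 4 := Nat.mul_le_mul_right 4 h2le
      omega
    have hzero : ∀ w : Fin c.length → ℝ × ℝ,
        ((ftaylorSeriesWithin ℝ Q u) (γ 0) c.length) w = 0 := by
      rw [hlen1]
      intro w
      rw [show ftaylorSeriesWithin ℝ Q u (γ 0) 1 = iteratedFDerivWithin ℝ 1 Q u (γ 0) from rfl,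
        iteratedFDerivWithin_of_isOpen _ hu (hmaps h0s), iteratedFDeriv_one_apply, hQ1]
      simp
    exact hzero _

lemma my_det2 (L : ℝ × ℝ →L[ℝ] ℝ × ℝ) (u v : ℝ × ℝ) :
    det2 (L u) (L v) = LinearMap.det (L.toLinearMap) * det2 u v := by
  have hdet : LinearMap.det (L.toLinearMap)
      = (L (1,0)).1 * (L (0,1)).2 - (L (0,1)).1 * (L (1,0)).2 := by
    rw [← LinearMap.det_toMatrix (Module.Basis.finTwoProd ℝ), Matrix.det_fin_two]
    simp [LinearMap.toMatrix_apply]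
  have key : ∀ w : ℝ × ℝ, L w = w.1 • L (1,0) + w.2 • L (0,1) := by
    intro w
    have h : L w = L (w.1 • ((1:ℝ),(0:ℝ)) + w.2 • ((0:ℝ),(1:ℝ))) := by
      congr 1
      ext <;> simp
    rw [h, map_add, map_smul, map_smul]
  rw [key u, key v, hdet]
  simp [det2]
  ring

lemma my_key (s : Set ℝ) (hs : IsOpen s) (h0s : (0:ℝ) ∈ s)
    (u : Set (ℝ×ℝ)) (hu : IsOpen u)
    (γ : ℝ → ℝ × ℝ) (hγ : ContDiffOn ℝ 7 γ s) (hγ0 : γ 0 = 0) (hmaps : Set.MapsTo γ s u)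
    (Φ : ℝ×ℝ → ℝ×ℝ) (hΦ : ContDiffOn ℝ 7 Φ u)
    (h1 : iteratedDeriv 1 γ 0 = 0) (h2 : iteratedDeriv 2 γ 0 = 0)
    (h3 : iteratedDeriv 3 γ 0 = 0)
    (n : ℕ) (hn1 : 1 ≤ n) (hn : n ≤ 7) :
    iteratedDeriv n (Φ ∘ γ) 0 = fderiv ℝ Φ 0 (iteratedDeriv n γ 0) := by
  set L := fderiv ℝ Φ 0 with hL
  have h0u : (0 : ℝ × ℝ) ∈ u := by rw [← hγ0]; exact hmaps h0s
  have hΦdiff : DifferentiableAt ℝ Φ 0 := by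
    have := hΦ.contDiffAt (hu.mem_nhds h0u)
    exact this.differentiableAt (by norm_num)
  have hmn : (n : WithTop ℕ∞) ≤ 7 := by exact_mod_cast hn
  have hQ : ContDiffOn ℝ 7 (fun x => Φ x - L x) u := hΦ.sub (L.contDiff.contDiffOn)
  have hQ1 : fderiv ℝ (fun x => Φ x - L x) (γ 0) = 0 := by
    rw [hγ0, fderiv_fun_sub hΦdiff L.differentiableAt, L.fderiv]
    simp [hL]
  have hzero := my_key_zero s hs h0s u hu γ hγ hmaps _ hQ hQ1 h1 h2 h3 n hn1 hn
  have hLγ : ContDiffOn ℝ 7 (fun t => L (γ t)) s := L.contDiff.comp_contDiffOn hγ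
  have hQγ : ContDiffOn ℝ 7 ((fun x => Φ x - L x) ∘ γ) s := hQ.comp hγ hmaps
  have hsplit : Φ ∘ γ = (fun t => L (γ t)) + ((fun x => Φ x - L x) ∘ γ) := by
    funext t; simp [Function.comp]
  have hlin : iteratedDeriv n (fun t => L (γ t)) 0 = L (iteratedDeriv n γ 0) := by
    rw [show (fun t => L (γ t)) = L ∘ γ from rfl]
    rw [iteratedDeriv_eq_iteratedFDeriv, ← iteratedFDerivWithin_of_isOpen n hs h0s,
      L.iteratedFDerivWithin_comp_left (hγ 0 h0s) hs.uniqueDiffOn h0s hmn]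
    rw [ContinuousLinearMap.compContinuousMultilinearMap_coe]
    rw [Function.comp_apply, iteratedFDerivWithin_of_isOpen n hs h0s,
      ← iteratedDeriv_eq_iteratedFDeriv]
  rw [← my_iteratedDerivWithin_of_isOpen hs h0s n (Φ ∘ γ), hsplit,
    iteratedDerivWithin_add h0s hs.uniqueDiffOn ((hLγ.of_le hmn) 0 h0s) ((hQγ.of_le hmn) 0 h0s),
    my_iteratedDerivWithin_of_isOpen hs h0s n, my_iteratedDerivWithin_of_isOpen hs h0s n,
    hlin, hzero, add_zero]

/-- Under `γ(0) = γ'(0) = γ''(0) = γ'''(0) = 0`, for every `C^∞`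
diffeomorphism germ `Φ : (ℝ²,0) → (ℝ²,0)` one has, with `γ̂ = Φ ∘ γ`,
`−77B̂² + 105ÂD̂ + 60ÂĈ = (det DΦ(0))² (−77B² + 105AD + 60AC)`. -/
theorem stmt_7 (I : Set ℝ) (hI : IsOpen I) (hI0 : (0 : ℝ) ∈ I)
    (γ : ℝ → ℝ × ℝ) (hγ : ContDiffOn ℝ ∞ γ I) (hγ0 : γ 0 = 0)
    (h1 : iteratedDeriv 1 γ 0 = 0) (h2 : iteratedDeriv 2 γ 0 = 0)
    (h3 : iteratedDeriv 3 γ 0 = 0)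
    (Φ Φinv : ℝ × ℝ → ℝ × ℝ) (hΦ : IsDiffeoGermAt0 ∞ Φ Φinv) :
    cuspInv45 (Φ ∘ γ) =
      LinearMap.det (fderiv ℝ Φ 0).toLinearMap ^ 2 * cuspInv45 γ := by
  have h7le : (7 : WithTop ℕ∞) ≤ ∞ := by
    rw [show ((7 : WithTop ℕ∞)) = ((7 : ℕ∞) : WithTop ℕ∞) from rfl]
    exact WithTop.coe_le_coe.mpr le_top
  obtain ⟨u₀, hu₀, hΦu₀⟩ := hΦ.2.2.1.contDiffOn h7le (by norm_num)
  set u : Set (ℝ × ℝ) := interior u₀ with hudef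
  have hu : IsOpen u := isOpen_interior
  have h0u : (0 : ℝ × ℝ) ∈ u := mem_interior_iff_mem_nhds.mpr hu₀
  have hΦu : ContDiffOn ℝ 7 Φ u := hΦu₀.mono interior_subset
  set s : Set ℝ := I ∩ γ ⁻¹' u with hsdef
  have hsopen : IsOpen s := hγ.continuousOn.isOpen_inter_preimage hI hu
  have h0s : (0 : ℝ) ∈ s := ⟨hI0, by simp [Set.mem_preimage, hγ0, h0u]⟩
  have hγs : ContDiffOn ℝ 7 γ s := (hγ.of_le h7le).mono Set.inter_subset_left
  have hmaps : Set.MapsTo γ s u := fun x hx => hx.2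
  have key : ∀ n : ℕ, 1 ≤ n → n ≤ 7 →
      iteratedDeriv n (Φ ∘ γ) 0 = fderiv ℝ Φ 0 (iteratedDeriv n γ 0) :=
    fun n hn1 hn => my_key s hsopen h0s u hu γ hγs hγ0 hmaps Φ hΦu h1 h2 h3 n hn1 hn
  have g4 := key 4 (by norm_num) (by norm_num)
  have g5 := key 5 (by norm_num) (by norm_num)
  have g6 := key 6 (by norm_num) (by norm_num)
  have g7 := key 7 (by norm_num) (by norm_num)
  unfold cuspInv45 Adet Bdet Cdet Ddet
  rw [g4, g5, g6, g7, my_det2, my_det2, my_det2, my_det2]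
  ring
end

section
/- Let γ : I → ℝ² be a C^∞ curve on an open interval I containing 0 with γ'(0) = γ''(0) = γ'''(0) = 0, and let ψ : (ℝ, 0) → (ℝ, 0) be a C^∞ diffeomorphism germ. Set γ̃ = γ ∘ ψ, and let Ã, B̃, C̃, D̃ be defined for γ̃ in the same way as A, B, C, D are defined for γ. Then −77B̃² + 105ÃD̃ + 60ÃC̃ = (ψ'(0))²⁰ · (−77B² + 105AD + 60AC). -/
open Filter Topology
open scoped ContDiff

lemma aux_contDiffOn_iteratedDeriv {F : Type*} [NormedAddCommGroup F] [NormedSpace ℝ F]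
    {s : Set ℝ} (hs : IsOpen s) :
    ∀ (k : ℕ) {f : ℝ → F} {n : ℕ}, ContDiffOn ℝ (n + k : ℕ) f s →
      ContDiffOn ℝ (n : ℕ) (iteratedDeriv k f) s := by
  intro k
  induction k with
  | zero => intro f n h; simpa [iteratedDeriv_zero] using h
  | succ k ih =>
    intro f n h
    rw [iteratedDeriv_succ']
    exact ih ((h.of_le (by exact_mod_cast Nat.le_refl _ : ((n + k + 1 : ℕ) : WithTop ℕ∞) ≤ ((n + (k+1) : ℕ) : WithTop ℕ∞))).deriv_of_isOpen hs
      (by exact_mod_cast Nat.le_refl _))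

lemma aux_hasDerivAt_iteratedDeriv {F : Type*} [NormedAddCommGroup F] [NormedSpace ℝ F]
    {f : ℝ → F} {s : Set ℝ} (hs : IsOpen s) {m k : ℕ}
    (hf : ContDiffOn ℝ (m : ℕ) f s) (hk : k + 1 ≤ m) {t : ℝ} (ht : t ∈ s) :
    HasDerivAt (iteratedDeriv k f) (iteratedDeriv (k+1) f t) t := by
  have h1 : ContDiffOn ℝ ((1 : ℕ) : WithTop ℕ∞) (iteratedDeriv k f) s :=
    aux_contDiffOn_iteratedDeriv hs k
      (hf.of_le (by exact_mod_cast (by omega : 1 + k ≤ m) : ((1 + k : ℕ) : WithTop ℕ∞) ≤ (m : ℕ)))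
  have hd : DifferentiableAt ℝ (iteratedDeriv k f) t :=
    (h1.differentiableOn (by norm_num)).differentiableAt (hs.mem_nhds ht)
  rw [iteratedDeriv_succ]
  exact hd.hasDerivAt

lemma key_formulas (I W : Set ℝ) (hI : IsOpen I) (hW : IsOpen W)
    (γ : ℝ → ℝ × ℝ) (ψ : ℝ → ℝ)
    (hγ8 : ContDiffOn ℝ ((8:ℕ) : WithTop ℕ∞) γ I)
    (hψ8 : ContDiffOn ℝ ((8:ℕ) : WithTop ℕ∞) ψ W)
    (hmap : ∀ t ∈ W, ψ t ∈ I) :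
    ∀ s ∈ W,
      (iteratedDeriv 4 (γ ∘ ψ) s =
      iteratedDeriv 4 ψ s • iteratedDeriv 1 γ (ψ s) +
      (4 * (iteratedDeriv 3 ψ s * iteratedDeriv 1 ψ s) + 3 * (iteratedDeriv 2 ψ s * iteratedDeriv 2 ψ s)) • iteratedDeriv 2 γ (ψ s) +
      (6 * (iteratedDeriv 2 ψ s * iteratedDeriv 1 ψ s * iteratedDeriv 1 ψ s)) • iteratedDeriv 3 γ (ψ s) +
      ((iteratedDeriv 1 ψ s * iteratedDeriv 1 ψ s * iteratedDeriv 1 ψ s * iteratedDeriv 1 ψ s)) • iteratedDeriv 4 γ (ψ s)) ∧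
      (iteratedDeriv 5 (γ ∘ ψ) s =
      iteratedDeriv 5 ψ s • iteratedDeriv 1 γ (ψ s) +
      (5 * (iteratedDeriv 4 ψ s * iteratedDeriv 1 ψ s) + 10 * (iteratedDeriv 3 ψ s * iteratedDeriv 2 ψ s)) • iteratedDeriv 2 γ (ψ s) +
      (10 * (iteratedDeriv 3 ψ s * iteratedDeriv 1 ψ s * iteratedDeriv 1 ψ s) + 15 * (iteratedDeriv 2 ψ s * iteratedDeriv 2 ψ s * iteratedDeriv 1 ψ s)) • iteratedDeriv 3 γ (ψ s) +
      (10 * (iteratedDeriv 2 ψ s * iteratedDeriv 1 ψ s * iteratedDeriv 1 ψ s * iteratedDeriv 1 ψ s)) • iteratedDeriv 4 γ (ψ s) +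
      ((iteratedDeriv 1 ψ s * iteratedDeriv 1 ψ s * iteratedDeriv 1 ψ s * iteratedDeriv 1 ψ s * iteratedDeriv 1 ψ s)) • iteratedDeriv 5 γ (ψ s)) ∧
      (iteratedDeriv 6 (γ ∘ ψ) s =
      iteratedDeriv 6 ψ s • iteratedDeriv 1 γ (ψ s) +
      (6 * (iteratedDeriv 5 ψ s * iteratedDeriv 1 ψ s) + 15 * (iteratedDeriv 4 ψ s * iteratedDeriv 2 ψ s) + 10 * (iteratedDeriv 3 ψ s * iteratedDeriv 3 ψ s)) • iteratedDeriv 2 γ (ψ s) +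
      (15 * (iteratedDeriv 4 ψ s * iteratedDeriv 1 ψ s * iteratedDeriv 1 ψ s) + 60 * (iteratedDeriv 3 ψ s * iteratedDeriv 2 ψ s * iteratedDeriv 1 ψ s) + 15 * (iteratedDeriv 2 ψ s * iteratedDeriv 2 ψ s * iteratedDeriv 2 ψ s)) • iteratedDeriv 3 γ (ψ s) +
      (20 * (iteratedDeriv 3 ψ s * iteratedDeriv 1 ψ s * iteratedDeriv 1 ψ s * iteratedDeriv 1 ψ s) + 45 * (iteratedDeriv 2 ψ s * iteratedDeriv 2 ψ s * iteratedDeriv 1 ψ s * iteratedDeriv 1 ψ s)) • iteratedDeriv 4 γ (ψ s) +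
      (15 * (iteratedDeriv 2 ψ s * iteratedDeriv 1 ψ s * iteratedDeriv 1 ψ s * iteratedDeriv 1 ψ s * iteratedDeriv 1 ψ s)) • iteratedDeriv 5 γ (ψ s) +
      ((iteratedDeriv 1 ψ s * iteratedDeriv 1 ψ s * iteratedDeriv 1 ψ s * iteratedDeriv 1 ψ s * iteratedDeriv 1 ψ s * iteratedDeriv 1 ψ s)) • iteratedDeriv 6 γ (ψ s)) ∧
      (iteratedDeriv 7 (γ ∘ ψ) s =
      iteratedDeriv 7 ψ s • iteratedDeriv 1 γ (ψ s) +
      (7 * (iteratedDeriv 6 ψ s * iteratedDeriv 1 ψ s) + 21 * (iteratedDeriv 5 ψ s * iteratedDeriv 2 ψ s) + 35 * (iteratedDeriv 4 ψ s * iteratedDeriv 3 ψ s)) • iteratedDeriv 2 γ (ψ s) +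
      (21 * (iteratedDeriv 5 ψ s * iteratedDeriv 1 ψ s * iteratedDeriv 1 ψ s) + 105 * (iteratedDeriv 4 ψ s * iteratedDeriv 2 ψ s * iteratedDeriv 1 ψ s) + 70 * (iteratedDeriv 3 ψ s * iteratedDeriv 3 ψ s * iteratedDeriv 1 ψ s) + 105 * (iteratedDeriv 3 ψ s * iteratedDeriv 2 ψ s * iteratedDeriv 2 ψ s)) • iteratedDeriv 3 γ (ψ s) +
      (35 * (iteratedDeriv 4 ψ s * iteratedDeriv 1 ψ s * iteratedDeriv 1 ψ s * iteratedDeriv 1 ψ s) + 210 * (iteratedDeriv 3 ψ s * iteratedDeriv 2 ψ s * iteratedDeriv 1 ψ s * iteratedDeriv 1 ψ s) + 105 * (iteratedDeriv 2 ψ s * iteratedDeriv 2 ψ s * iteratedDeriv 2 ψ s * iteratedDeriv 1 ψ s)) • iteratedDeriv 4 γ (ψ s) +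
      (35 * (iteratedDeriv 3 ψ s * iteratedDeriv 1 ψ s * iteratedDeriv 1 ψ s * iteratedDeriv 1 ψ s * iteratedDeriv 1 ψ s) + 105 * (iteratedDeriv 2 ψ s * iteratedDeriv 2 ψ s * iteratedDeriv 1 ψ s * iteratedDeriv 1 ψ s * iteratedDeriv 1 ψ s)) • iteratedDeriv 5 γ (ψ s) +
      (21 * (iteratedDeriv 2 ψ s * iteratedDeriv 1 ψ s * iteratedDeriv 1 ψ s * iteratedDeriv 1 ψ s * iteratedDeriv 1 ψ s * iteratedDeriv 1 ψ s)) • iteratedDeriv 6 γ (ψ s) +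
      ((iteratedDeriv 1 ψ s * iteratedDeriv 1 ψ s * iteratedDeriv 1 ψ s * iteratedDeriv 1 ψ s * iteratedDeriv 1 ψ s * iteratedDeriv 1 ψ s * iteratedDeriv 1 ψ s)) • iteratedDeriv 7 γ (ψ s)) := by
  have hP : ∀ (k : ℕ), k + 1 ≤ 8 → ∀ t ∈ W,
      HasDerivAt (iteratedDeriv k ψ) (iteratedDeriv (k+1) ψ t) t :=
    fun k hk t ht => aux_hasDerivAt_iteratedDeriv hW hψ8 hk ht
  have hC : ∀ (k : ℕ), k + 1 ≤ 8 → ∀ t ∈ W,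
      HasDerivAt (fun s => iteratedDeriv k γ (ψ s))
        (iteratedDeriv 1 ψ t • iteratedDeriv (k+1) γ (ψ t)) t := by
    intro k hk t ht
    have hg : HasDerivAt (iteratedDeriv k γ) (iteratedDeriv (k+1) γ (ψ t)) (ψ t) :=
      aux_hasDerivAt_iteratedDeriv hI hγ8 hk (hmap t ht)
    have hps : HasDerivAt ψ (iteratedDeriv 1 ψ t) t := by
      have h0 := hP 0 (by omega) t ht
      rwa [iteratedDeriv_zero] at h0
    exact HasDerivAt.scomp (𝕜 := ℝ) (𝕜' := ℝ) t hg hps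
  have hP1 : ∀ t ∈ W, HasDerivAt (iteratedDeriv 1 ψ) (iteratedDeriv 2 ψ t) t :=
    fun t ht => by simpa using hP 1 (by omega) t ht
  have hP2 : ∀ t ∈ W, HasDerivAt (iteratedDeriv 2 ψ) (iteratedDeriv 3 ψ t) t :=
    fun t ht => by simpa using hP 2 (by omega) t ht
  have hP3 : ∀ t ∈ W, HasDerivAt (iteratedDeriv 3 ψ) (iteratedDeriv 4 ψ t) t :=
    fun t ht => by simpa using hP 3 (by omega) t ht
  have hP4 : ∀ t ∈ W, HasDerivAt (iteratedDeriv 4 ψ) (iteratedDeriv 5 ψ t) t :=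
    fun t ht => by simpa using hP 4 (by omega) t ht
  have hP5 : ∀ t ∈ W, HasDerivAt (iteratedDeriv 5 ψ) (iteratedDeriv 6 ψ t) t :=
    fun t ht => by simpa using hP 5 (by omega) t ht
  have hP6 : ∀ t ∈ W, HasDerivAt (iteratedDeriv 6 ψ) (iteratedDeriv 7 ψ t) t :=
    fun t ht => by simpa using hP 6 (by omega) t ht
  have hP7 : ∀ t ∈ W, HasDerivAt (iteratedDeriv 7 ψ) (iteratedDeriv 8 ψ t) t :=
    fun t ht => by simpa using hP 7 (by omega) t ht
  have hC1 : ∀ t ∈ W, HasDerivAt (fun s => iteratedDeriv 1 γ (ψ s)) (iteratedDeriv 1 ψ t • iteratedDeriv 2 γ (ψ t)) t :=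
    fun t ht => by simpa using hC 1 (by omega) t ht
  have hC2 : ∀ t ∈ W, HasDerivAt (fun s => iteratedDeriv 2 γ (ψ s)) (iteratedDeriv 1 ψ t • iteratedDeriv 3 γ (ψ t)) t :=
    fun t ht => by simpa using hC 2 (by omega) t ht
  have hC3 : ∀ t ∈ W, HasDerivAt (fun s => iteratedDeriv 3 γ (ψ s)) (iteratedDeriv 1 ψ t • iteratedDeriv 4 γ (ψ t)) t :=
    fun t ht => by simpa using hC 3 (by omega) t ht
  have hC4 : ∀ t ∈ W, HasDerivAt (fun s => iteratedDeriv 4 γ (ψ s)) (iteratedDeriv 1 ψ t • iteratedDeriv 5 γ (ψ t)) t :=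
    fun t ht => by simpa using hC 4 (by omega) t ht
  have hC5 : ∀ t ∈ W, HasDerivAt (fun s => iteratedDeriv 5 γ (ψ s)) (iteratedDeriv 1 ψ t • iteratedDeriv 6 γ (ψ t)) t :=
    fun t ht => by simpa using hC 5 (by omega) t ht
  have hC6 : ∀ t ∈ W, HasDerivAt (fun s => iteratedDeriv 6 γ (ψ s)) (iteratedDeriv 1 ψ t • iteratedDeriv 7 γ (ψ t)) t :=
    fun t ht => by simpa using hC 6 (by omega) t ht
  have hC7 : ∀ t ∈ W, HasDerivAt (fun s => iteratedDeriv 7 γ (ψ s)) (iteratedDeriv 1 ψ t • iteratedDeriv 8 γ (ψ t)) t :=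
    fun t ht => by simpa using hC 7 (by omega) t ht
  have H1 : ∀ s ∈ W, iteratedDeriv 1 (γ ∘ ψ) s = iteratedDeriv 1 ψ s • iteratedDeriv 1 γ (ψ s) := by
    intro t ht
    have h0 := hC 0 (by omega) t ht
    rw [iteratedDeriv_zero] at h0
    rw [iteratedDeriv_one]
    exact h0.deriv
  have H2 : ∀ s ∈ W, iteratedDeriv 2 (γ ∘ ψ) s =
      iteratedDeriv 2 ψ s • iteratedDeriv 1 γ (ψ s) +
      ((iteratedDeriv 1 ψ s * iteratedDeriv 1 ψ s)) • iteratedDeriv 2 γ (ψ s) := by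
    intro t ht
    have heq : iteratedDeriv 1 (γ ∘ ψ) =ᶠ[𝓝 t] fun s =>
        iteratedDeriv 1 ψ s • iteratedDeriv 1 γ (ψ s) :=
      Filter.eventuallyEq_of_mem (hW.mem_nhds ht) (fun s hs => H1 s hs)
    rw [iteratedDeriv_succ, heq.deriv_eq]
    have hd := ((hP1 t ht).smul (hC1 t ht))
    exact hd.deriv.trans (by match_scalars <;> ring)
  have H3 : ∀ s ∈ W, iteratedDeriv 3 (γ ∘ ψ) s =
      iteratedDeriv 3 ψ s • iteratedDeriv 1 γ (ψ s) +
      (3 * (iteratedDeriv 2 ψ s * iteratedDeriv 1 ψ s)) • iteratedDeriv 2 γ (ψ s) +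
      ((iteratedDeriv 1 ψ s * iteratedDeriv 1 ψ s * iteratedDeriv 1 ψ s)) • iteratedDeriv 3 γ (ψ s) := by
    intro t ht
    have heq : iteratedDeriv 2 (γ ∘ ψ) =ᶠ[𝓝 t] fun s =>
        iteratedDeriv 2 ψ s • iteratedDeriv 1 γ (ψ s) +
      ((iteratedDeriv 1 ψ s * iteratedDeriv 1 ψ s)) • iteratedDeriv 2 γ (ψ s) :=
      Filter.eventuallyEq_of_mem (hW.mem_nhds ht) (fun s hs => H2 s hs)
    rw [iteratedDeriv_succ, heq.deriv_eq]
    have hd := (((hP2 t ht).smul (hC1 t ht)).add (((hP1 t ht).mul (hP1 t ht)).smul (hC2 t ht)))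
    simp only [Pi.mul_apply, Pi.pow_apply, Pi.add_apply] at hd
    exact hd.deriv.trans (by match_scalars <;> ring)
  have H4 : ∀ s ∈ W, iteratedDeriv 4 (γ ∘ ψ) s =
      iteratedDeriv 4 ψ s • iteratedDeriv 1 γ (ψ s) +
      (4 * (iteratedDeriv 3 ψ s * iteratedDeriv 1 ψ s) + 3 * (iteratedDeriv 2 ψ s * iteratedDeriv 2 ψ s)) • iteratedDeriv 2 γ (ψ s) +
      (6 * (iteratedDeriv 2 ψ s * iteratedDeriv 1 ψ s * iteratedDeriv 1 ψ s)) • iteratedDeriv 3 γ (ψ s) +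
      ((iteratedDeriv 1 ψ s * iteratedDeriv 1 ψ s * iteratedDeriv 1 ψ s * iteratedDeriv 1 ψ s)) • iteratedDeriv 4 γ (ψ s) := by
    intro t ht
    have heq : iteratedDeriv 3 (γ ∘ ψ) =ᶠ[𝓝 t] fun s =>
        iteratedDeriv 3 ψ s • iteratedDeriv 1 γ (ψ s) +
      (3 * (iteratedDeriv 2 ψ s * iteratedDeriv 1 ψ s)) • iteratedDeriv 2 γ (ψ s) +
      ((iteratedDeriv 1 ψ s * iteratedDeriv 1 ψ s * iteratedDeriv 1 ψ s)) • iteratedDeriv 3 γ (ψ s) :=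
      Filter.eventuallyEq_of_mem (hW.mem_nhds ht) (fun s hs => H3 s hs)
    rw [iteratedDeriv_succ, heq.deriv_eq]
    have hd := ((((hP3 t ht).smul (hC1 t ht)).add ((((hP2 t ht).mul (hP1 t ht)).const_mul (3:ℝ)).smul (hC2 t ht))).add ((((hP1 t ht).mul (hP1 t ht)).mul (hP1 t ht)).smul (hC3 t ht)))
    simp only [Pi.mul_apply, Pi.pow_apply, Pi.add_apply] at hd
    exact hd.deriv.trans (by match_scalars <;> ring)
  have H5 : ∀ s ∈ W, iteratedDeriv 5 (γ ∘ ψ) s =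
      iteratedDeriv 5 ψ s • iteratedDeriv 1 γ (ψ s) +
      (5 * (iteratedDeriv 4 ψ s * iteratedDeriv 1 ψ s) + 10 * (iteratedDeriv 3 ψ s * iteratedDeriv 2 ψ s)) • iteratedDeriv 2 γ (ψ s) +
      (10 * (iteratedDeriv 3 ψ s * iteratedDeriv 1 ψ s * iteratedDeriv 1 ψ s) + 15 * (iteratedDeriv 2 ψ s * iteratedDeriv 2 ψ s * iteratedDeriv 1 ψ s)) • iteratedDeriv 3 γ (ψ s) +
      (10 * (iteratedDeriv 2 ψ s * iteratedDeriv 1 ψ s * iteratedDeriv 1 ψ s * iteratedDeriv 1 ψ s)) • iteratedDeriv 4 γ (ψ s) +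
      ((iteratedDeriv 1 ψ s * iteratedDeriv 1 ψ s * iteratedDeriv 1 ψ s * iteratedDeriv 1 ψ s * iteratedDeriv 1 ψ s)) • iteratedDeriv 5 γ (ψ s) := by
    intro t ht
    have heq : iteratedDeriv 4 (γ ∘ ψ) =ᶠ[𝓝 t] fun s =>
        iteratedDeriv 4 ψ s • iteratedDeriv 1 γ (ψ s) +
      (4 * (iteratedDeriv 3 ψ s * iteratedDeriv 1 ψ s) + 3 * (iteratedDeriv 2 ψ s * iteratedDeriv 2 ψ s)) • iteratedDeriv 2 γ (ψ s) +
      (6 * (iteratedDeriv 2 ψ s * iteratedDeriv 1 ψ s * iteratedDeriv 1 ψ s)) • iteratedDeriv 3 γ (ψ s) +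
      ((iteratedDeriv 1 ψ s * iteratedDeriv 1 ψ s * iteratedDeriv 1 ψ s * iteratedDeriv 1 ψ s)) • iteratedDeriv 4 γ (ψ s) :=
      Filter.eventuallyEq_of_mem (hW.mem_nhds ht) (fun s hs => H4 s hs)
    rw [iteratedDeriv_succ, heq.deriv_eq]
    have hd := (((((hP4 t ht).smul (hC1 t ht)).add (((((hP3 t ht).mul (hP1 t ht)).const_mul (4:ℝ)).add (((hP2 t ht).mul (hP2 t ht)).const_mul (3:ℝ))).smul (hC2 t ht))).add (((((hP2 t ht).mul (hP1 t ht)).mul (hP1 t ht)).const_mul (6:ℝ)).smul (hC3 t ht))).add (((((hP1 t ht).mul (hP1 t ht)).mul (hP1 t ht)).mul (hP1 t ht)).smul (hC4 t ht)))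
    simp only [Pi.mul_apply, Pi.pow_apply, Pi.add_apply] at hd
    exact hd.deriv.trans (by match_scalars <;> ring)
  have H6 : ∀ s ∈ W, iteratedDeriv 6 (γ ∘ ψ) s =
      iteratedDeriv 6 ψ s • iteratedDeriv 1 γ (ψ s) +
      (6 * (iteratedDeriv 5 ψ s * iteratedDeriv 1 ψ s) + 15 * (iteratedDeriv 4 ψ s * iteratedDeriv 2 ψ s) + 10 * (iteratedDeriv 3 ψ s * iteratedDeriv 3 ψ s)) • iteratedDeriv 2 γ (ψ s) +
      (15 * (iteratedDeriv 4 ψ s * iteratedDeriv 1 ψ s * iteratedDeriv 1 ψ s) + 60 * (iteratedDeriv 3 ψ s * iteratedDeriv 2 ψ s * iteratedDeriv 1 ψ s) + 15 * (iteratedDeriv 2 ψ s * iteratedDeriv 2 ψ s * iteratedDeriv 2 ψ s)) • iteratedDeriv 3 γ (ψ s) +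
      (20 * (iteratedDeriv 3 ψ s * iteratedDeriv 1 ψ s * iteratedDeriv 1 ψ s * iteratedDeriv 1 ψ s) + 45 * (iteratedDeriv 2 ψ s * iteratedDeriv 2 ψ s * iteratedDeriv 1 ψ s * iteratedDeriv 1 ψ s)) • iteratedDeriv 4 γ (ψ s) +
      (15 * (iteratedDeriv 2 ψ s * iteratedDeriv 1 ψ s * iteratedDeriv 1 ψ s * iteratedDeriv 1 ψ s * iteratedDeriv 1 ψ s)) • iteratedDeriv 5 γ (ψ s) +
      ((iteratedDeriv 1 ψ s * iteratedDeriv 1 ψ s * iteratedDeriv 1 ψ s * iteratedDeriv 1 ψ s * iteratedDeriv 1 ψ s * iteratedDeriv 1 ψ s)) • iteratedDeriv 6 γ (ψ s) := by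
    intro t ht
    have heq : iteratedDeriv 5 (γ ∘ ψ) =ᶠ[𝓝 t] fun s =>
        iteratedDeriv 5 ψ s • iteratedDeriv 1 γ (ψ s) +
      (5 * (iteratedDeriv 4 ψ s * iteratedDeriv 1 ψ s) + 10 * (iteratedDeriv 3 ψ s * iteratedDeriv 2 ψ s)) • iteratedDeriv 2 γ (ψ s) +
      (10 * (iteratedDeriv 3 ψ s * iteratedDeriv 1 ψ s * iteratedDeriv 1 ψ s) + 15 * (iteratedDeriv 2 ψ s * iteratedDeriv 2 ψ s * iteratedDeriv 1 ψ s)) • iteratedDeriv 3 γ (ψ s) +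
      (10 * (iteratedDeriv 2 ψ s * iteratedDeriv 1 ψ s * iteratedDeriv 1 ψ s * iteratedDeriv 1 ψ s)) • iteratedDeriv 4 γ (ψ s) +
      ((iteratedDeriv 1 ψ s * iteratedDeriv 1 ψ s * iteratedDeriv 1 ψ s * iteratedDeriv 1 ψ s * iteratedDeriv 1 ψ s)) • iteratedDeriv 5 γ (ψ s) :=
      Filter.eventuallyEq_of_mem (hW.mem_nhds ht) (fun s hs => H5 s hs)
    rw [iteratedDeriv_succ, heq.deriv_eq]
    have hd := ((((((hP5 t ht).smul (hC1 t ht)).add (((((hP4 t ht).mul (hP1 t ht)).const_mul (5:ℝ)).add (((hP3 t ht).mul (hP2 t ht)).const_mul (10:ℝ))).smul (hC2 t ht))).add ((((((hP3 t ht).mul (hP1 t ht)).mul (hP1 t ht)).const_mul (10:ℝ)).add ((((hP2 t ht).mul (hP2 t ht)).mul (hP1 t ht)).const_mul (15:ℝ))).smul (hC3 t ht))).add ((((((hP2 t ht).mul (hP1 t ht)).mul (hP1 t ht)).mul (hP1 t ht)).const_mul (10:ℝ)).smul (hC4 t ht))).add ((((((hP1 t ht).mul (hP1 t ht)).mul (hP1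 t ht)).mul (hP1 t ht)).mul (hP1 t ht)).smul (hC5 t ht)))
    simp only [Pi.mul_apply, Pi.pow_apply, Pi.add_apply] at hd
    exact hd.deriv.trans (by match_scalars <;> ring)
  have H7 : ∀ s ∈ W, iteratedDeriv 7 (γ ∘ ψ) s =
      iteratedDeriv 7 ψ s • iteratedDeriv 1 γ (ψ s) +
      (7 * (iteratedDeriv 6 ψ s * iteratedDeriv 1 ψ s) + 21 * (iteratedDeriv 5 ψ s * iteratedDeriv 2 ψ s) + 35 * (iteratedDeriv 4 ψ s * iteratedDeriv 3 ψ s)) • iteratedDeriv 2 γ (ψ s) +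
      (21 * (iteratedDeriv 5 ψ s * iteratedDeriv 1 ψ s * iteratedDeriv 1 ψ s) + 105 * (iteratedDeriv 4 ψ s * iteratedDeriv 2 ψ s * iteratedDeriv 1 ψ s) + 70 * (iteratedDeriv 3 ψ s * iteratedDeriv 3 ψ s * iteratedDeriv 1 ψ s) + 105 * (iteratedDeriv 3 ψ s * iteratedDeriv 2 ψ s * iteratedDeriv 2 ψ s)) • iteratedDeriv 3 γ (ψ s) +
      (35 * (iteratedDeriv 4 ψ s * iteratedDeriv 1 ψ s * iteratedDeriv 1 ψ s * iteratedDeriv 1 ψ s) + 210 * (iteratedDeriv 3 ψ s * iteratedDeriv 2 ψ s * iteratedDeriv 1 ψ s * iteratedDeriv 1 ψ s) + 105 * (iteratedDeriv 2 ψ s * iteratedDeriv 2 ψ s * iteratedDeriv 2 ψ s * iteratedDeriv 1 ψ s)) • iteratedDeriv 4 γ (ψ s) +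
      (35 * (iteratedDeriv 3 ψ s * iteratedDeriv 1 ψ s * iteratedDeriv 1 ψ s * iteratedDeriv 1 ψ s * iteratedDeriv 1 ψ s) + 105 * (iteratedDeriv 2 ψ s * iteratedDeriv 2 ψ s * iteratedDeriv 1 ψ s * iteratedDeriv 1 ψ s * iteratedDeriv 1 ψ s)) • iteratedDeriv 5 γ (ψ s) +
      (21 * (iteratedDeriv 2 ψ s * iteratedDeriv 1 ψ s * iteratedDeriv 1 ψ s * iteratedDeriv 1 ψ s * iteratedDeriv 1 ψ s * iteratedDeriv 1 ψ s)) • iteratedDeriv 6 γ (ψ s) +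
      ((iteratedDeriv 1 ψ s * iteratedDeriv 1 ψ s * iteratedDeriv 1 ψ s * iteratedDeriv 1 ψ s * iteratedDeriv 1 ψ s * iteratedDeriv 1 ψ s * iteratedDeriv 1 ψ s)) • iteratedDeriv 7 γ (ψ s) := by
    intro t ht
    have heq : iteratedDeriv 6 (γ ∘ ψ) =ᶠ[𝓝 t] fun s =>
        iteratedDeriv 6 ψ s • iteratedDeriv 1 γ (ψ s) +
      (6 * (iteratedDeriv 5 ψ s * iteratedDeriv 1 ψ s) + 15 * (iteratedDeriv 4 ψ s * iteratedDeriv 2 ψ s) + 10 * (iteratedDeriv 3 ψ s * iteratedDeriv 3 ψ s)) • iteratedDeriv 2 γ (ψ s) +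
      (15 * (iteratedDeriv 4 ψ s * iteratedDeriv 1 ψ s * iteratedDeriv 1 ψ s) + 60 * (iteratedDeriv 3 ψ s * iteratedDeriv 2 ψ s * iteratedDeriv 1 ψ s) + 15 * (iteratedDeriv 2 ψ s * iteratedDeriv 2 ψ s * iteratedDeriv 2 ψ s)) • iteratedDeriv 3 γ (ψ s) +
      (20 * (iteratedDeriv 3 ψ s * iteratedDeriv 1 ψ s * iteratedDeriv 1 ψ s * iteratedDeriv 1 ψ s) + 45 * (iteratedDeriv 2 ψ s * iteratedDeriv 2 ψ s * iteratedDeriv 1 ψ s * iteratedDeriv 1 ψ s)) • iteratedDeriv 4 γ (ψ s) +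
      (15 * (iteratedDeriv 2 ψ s * iteratedDeriv 1 ψ s * iteratedDeriv 1 ψ s * iteratedDeriv 1 ψ s * iteratedDeriv 1 ψ s)) • iteratedDeriv 5 γ (ψ s) +
      ((iteratedDeriv 1 ψ s * iteratedDeriv 1 ψ s * iteratedDeriv 1 ψ s * iteratedDeriv 1 ψ s * iteratedDeriv 1 ψ s * iteratedDeriv 1 ψ s)) • iteratedDeriv 6 γ (ψ s) :=
      Filter.eventuallyEq_of_mem (hW.mem_nhds ht) (fun s hs => H6 s hs)
    rw [iteratedDeriv_succ, heq.deriv_eq]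
    have hd := (((((((hP6 t ht).smul (hC1 t ht)).add ((((((hP5 t ht).mul (hP1 t ht)).const_mul (6:ℝ)).add (((hP4 t ht).mul (hP2 t ht)).const_mul (15:ℝ))).add (((hP3 t ht).mul (hP3 t ht)).const_mul (10:ℝ))).smul (hC2 t ht))).add (((((((hP4 t ht).mul (hP1 t ht)).mul (hP1 t ht)).const_mul (15:ℝ)).add ((((hP3 t ht).mul (hP2 t ht)).mul (hP1 t ht)).const_mul (60:ℝ))).add ((((hP2 t ht).mul (hP2 t ht)).mul (hP2 t ht)).const_mul (15:ℝ))).smul (hC3 t ht))).add (((((((hP3 t ht).mul (hP1 t ht)).mul (hP1 t ht)).mul (hP1 t ht)).const_mul (20:ℝ)).add (((((hP2 t ht).mul (hP2 t ht)).mul (hP1 t ht)).mul (hP1 t ht)).const_mul (45:ℝ))).smul (hC4 t ht))).add (((((((hP2 t ht).mul (hP1 t ht)).mul (hP1 t ht)).mul (hP1 t ht)).mul (hP1 t ht)).const_mul (15:ℝ)).smul (hC5 t ht))).add (((((((hP1 t ht).mul (hP1 t ht)).mul (hP1 t ht)).mul (hP1 t ht)).mul (hP1 t ht)).mul (hP1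 t ht)).smul (hC6 t ht)))
    simp only [Pi.mul_apply, Pi.pow_apply, Pi.add_apply] at hd
    exact hd.deriv.trans (by match_scalars <;> ring)
  exact fun s hs => ⟨H4 s hs, H5 s hs, H6 s hs, H7 s hs⟩


/-- Under `γ'(0) = γ''(0) = γ'''(0) = 0`, for every `C^∞`
diffeomorphism germ `ψ : (ℝ,0) → (ℝ,0)` one has, with `γ̃ = γ ∘ ψ`,
`−77B̃² + 105ÃD̃ + 60ÃC̃ = (ψ'(0))²⁰ (−77B² + 105AD + 60AC)`. -/
theorem stmt_8 (I : Set ℝ) (hI : IsOpen I) (hI0 : (0 : ℝ) ∈ I)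
    (γ : ℝ → ℝ × ℝ) (hγ : ContDiffOn ℝ ∞ γ I)
    (h1 : iteratedDeriv 1 γ 0 = 0) (h2 : iteratedDeriv 2 γ 0 = 0)
    (h3 : iteratedDeriv 3 γ 0 = 0)
    (ψ ψinv : ℝ → ℝ) (hψ : IsDiffeoGermAt0 ∞ ψ ψinv) :
    cuspInv45 (γ ∘ ψ) = deriv ψ 0 ^ 20 * cuspInv45 γ := by
  obtain ⟨hψ0, -, hψc, -, -, -⟩ := hψ
  have hle : ((8 : ℕ) : WithTop ℕ∞) ≤ ∞ := WithTop.coe_le_coe.mpr le_top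
  obtain ⟨u, hu, hψu⟩ := hψc.contDiffOn hle (fun h => absurd h (by simp))
  have hpre : ψ ⁻¹' I ∈ 𝓝 (0:ℝ) :=
    hψc.continuousAt.preimage_mem_nhds (by rw [hψ0]; exact hI.mem_nhds hI0)
  obtain ⟨W, hWsub, hWo, hW0⟩ := mem_nhds_iff.mp (Filter.inter_mem hu hpre)
  have hψ8 : ContDiffOn ℝ ((8:ℕ) : WithTop ℕ∞) ψ W :=
    hψu.mono (fun x hx => (hWsub hx).1)
  have hmap : ∀ t ∈ W, ψ t ∈ I := fun t ht => (hWsub ht).2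
  have hγ8 : ContDiffOn ℝ ((8:ℕ) : WithTop ℕ∞) γ I := hγ.of_le hle
  obtain ⟨e4, e5, e6, e7⟩ := key_formulas I W hI hWo γ ψ hγ8 hψ8 hmap 0 hW0
  rw [hψ0] at e4 e5 e6 e7
  simp only [h1, h2, h3, smul_zero, zero_add, add_zero] at e4 e5 e6 e7
  simp only [cuspInv45, Adet, Bdet, Cdet, Ddet, det2, e4, e5, e6, e7,
    Prod.fst_add, Prod.snd_add, Prod.smul_fst, Prod.smul_snd, smul_eq_mul,
    ← iteratedDeriv_one]
  ring
end
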